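/- arXiv:1111.1977 — 9 statements merged into one kernel-verified Lean document; each statement's English description precedes it below -/
import Mathlib

section
/- Let $\{X_k, \mathcal{F}_k\}_{k=0}^n$ be a discrete-parameter real-valued martingale such that almost surely $|X_k - X_{k-1}| \le d$ and $\mathbb{E}[(X_k - X_{k-1})^2 \mid \mathcal{F}_{k-1}] \le \sigma^2$ for every $k \in \{1,\dots,n\}$, for constants $d, \sigma > 0$. Let $\gamma = \sigma^2/d^2$ and $\delta = \alpha/d$. Then for every $\alpha \ge 0$ with $\delta \le 1$, $\Pr(X_n - X_0 \ge \alpha n) \le \exp\left(-n\, D\left(\frac{\delta+\gamma}{1+\gamma} \,\Big\|\, \frac{\gamma}{1+\gamma}\right)\right)$, where $D(p\|q) = p\ln(p/q) + (1-p)\ln((1-p)/(1-q))$ is the binary relative entropy. -/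
/-!
Bennett's argument. If `Y ≤ d`, then `e^{uY}` (for `u ≥ 0`) lies below the quadratic in `Y` that
is tangent to it at `-σ²/d` and meets it at `d`; taking conditional expectations with conditional
mean `0` and conditional second moment `≤ σ²`, the conditional MGF of each martingale increment is
at most the MGF of the two-point law on `{-σ²/d, d}` with mean `0` and variance `σ²`. The tower
property bounds the MGF of `X n - X 0` by the `n`-th power of this, and Chernoff's inequality leaves
`(e^{-uα} · MGF)^n`. With `t = u (d² + σ²) / d` this is the Chernoff bound
`(e^{-ts} (1 - p + p e^t))^n` of a Bernoulli(`p`) variable, `p = γ/(1+γ)`, `s = (δ+γ)/(1+γ)`, whose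
infimum over `t ≥ 0` is `e^{-n D(s‖p)}`.
-/

open MeasureTheory

/-- Binary relative entropy (KL divergence between Bernoulli(p) and Bernoulli(q)). -/
noncomputable def binKL (p q : ℝ) : ℝ :=
  p * Real.log (p / q) + (1 - p) * Real.log ((1 - p) / (1 - q))

open Real Filter Topology ProbabilityTheory

/-- Equal to `(exp x - 1 - x) / x ^ 2` for `x ≠ 0`; the integral form makes monotonicity evident. -/
noncomputable def expRemainderCoeff (x : ℝ) : ℝ := ∫ w in (0 : ℝ)..1, (1 - w) * exp (x * w)

lemma expRemainderCoeff_nonneg (x : ℝ) : 0 ≤ expRemainderCoeff x :=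
  intervalIntegral.integral_nonneg zero_le_one fun _ hw =>
    mul_nonneg (sub_nonneg.2 hw.2) (exp_nonneg _)

lemma monotone_expRemainderCoeff : Monotone expRemainderCoeff := by
  intro x y hxy
  have hcont (z : ℝ) : Continuous fun w : ℝ => (1 - w) * exp (z * w) := by fun_prop
  refine intervalIntegral.integral_mono_on zero_le_one ((hcont x).intervalIntegrable _ _)
    ((hcont y).intervalIntegrable _ _) fun _ hw => ?_
  gcongr
  · exact sub_nonneg.2 hw.2
  · exact hw.1

lemma exp_eq_one_add_add_sq_mul_expRemainderCoeff (x : ℝ) :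
    exp x = 1 + x + x ^ 2 * expRemainderCoeff x := by
  have hderiv (w : ℝ) : HasDerivAt (fun w => exp (x * w) * (1 + x * (1 - w)))
      (x ^ 2 * ((1 - w) * exp (x * w))) w := by
    have hexp : HasDerivAt (fun w => exp (x * w)) (exp (x * w) * x) w := by
      simpa using ((hasDerivAt_id w).const_mul x).exp
    have hlin : HasDerivAt (fun w => 1 + x * (1 - w)) (-x) w := by
      simpa using (((hasDerivAt_id w).const_sub 1).const_mul x).const_add 1
    exact (hexp.mul hlin).congr_deriv (by ring)
  have hint := intervalIntegral.integral_eq_sub_of_hasDerivAt (a := 0) (b := 1)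
    (fun w _ => hderiv w) (by apply Continuous.intervalIntegrable; fun_prop)
  rw [expRemainderCoeff, ← intervalIntegral.integral_const_mul, hint]
  simp

lemma exp_le_one_add_add_sq_mul_expRemainderCoeff {x c : ℝ} (hxc : x ≤ c) :
    exp x ≤ 1 + x + x ^ 2 * expRemainderCoeff c := by
  rw [exp_eq_one_add_add_sq_mul_expRemainderCoeff x]
  gcongr
  exact monotone_expRemainderCoeff hxc

/-- The MGF at `u` of the two-point law on `{-σ²/d, d}` with mean `0` and variance `σ²`. -/
noncomputable def bennettBound (d σ u : ℝ) : ℝ :=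
  (d ^ 2 * exp (-(u * σ ^ 2 / d)) + σ ^ 2 * exp (u * d)) / (d ^ 2 + σ ^ 2)

section CondExp

variable {Ω : Type*} {m m0 : MeasurableSpace Ω} {μ : Measure Ω}

lemma condExp_const_add_mul_add_mul_sq (hm : m ≤ m0) [IsFiniteMeasure μ] {Y : Ω → ℝ}
    (hY : Integrable Y μ) (hY2 : Integrable (fun ω => Y ω ^ 2) μ) (A B C : ℝ) :
    μ[fun ω => A + B * Y ω + C * Y ω ^ 2 | m] =ᵐ[μ]
      fun ω => A + B * μ[Y | m] ω + C * μ[fun ω => Y ω ^ 2 | m] ω := by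
  change μ[(fun _ => A) + B • Y + C • fun ω => Y ω ^ 2 | m] =ᵐ[μ] _
  filter_upwards [condExp_add ((integrable_const A).add (hY.smul B)) (hY2.smul C) m,
    condExp_add (integrable_const A) (hY.smul B) m, condExp_smul B Y m,
    condExp_smul C (fun ω => Y ω ^ 2) m] with ω hsum hfirst hB hC
  simp only [hsum, Pi.add_apply, hfirst, hB, hC, condExp_const hm, Pi.smul_apply, smul_eq_mul]

lemma condExp_exp_mul_le_bennettBound (hm : m ≤ m0) [IsFiniteMeasure μ] {Y : Ω → ℝ} {d σ u : ℝ}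
    (hY : AEStronglyMeasurable Y μ) (hd : 0 < d) (hu : 0 ≤ u) (hbound : ∀ᵐ ω ∂μ, |Y ω| ≤ d)
    (hmean : μ[Y | m] =ᵐ[μ] 0) (hvar : ∀ᵐ ω ∂μ, μ[fun ω => Y ω ^ 2 | m] ω ≤ σ ^ 2) :
    ∀ᵐ ω ∂μ, μ[fun ω => exp (u * Y ω) | m] ω ≤ bennettBound d σ u := by
  set a := -(σ ^ 2 / d)
  set K := u ^ 2 * expRemainderCoeff (u * (d - a))
  have hK : 0 ≤ K := mul_nonneg (sq_nonneg u) (expRemainderCoeff_nonneg _)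
  have hY1 : Integrable Y μ := .of_bound hY d (by simpa using hbound)
  have hY2 : Integrable (fun ω => Y ω ^ 2) μ := .of_bound (hY.pow 2) (d ^ 2) <| by
    filter_upwards [hbound] with ω hω
    simpa using pow_le_pow_left₀ (abs_nonneg _) hω 2
  have hexp : Integrable (fun ω => exp (u * Y ω)) μ := .of_bound
    (continuous_exp.comp_aestronglyMeasurable (hY.const_mul u)) (exp (u * d)) <| by
    filter_upwards [hbound] with ω hω
    rw [norm_of_nonneg (exp_nonneg _), exp_le_exp]
    exact mul_le_mul_of_nonneg_left (abs_le.1 hω).2 hu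
  -- tangent to `exp (u * ·)` at `a` and exact at `d`, so saturated by the two-point law on `{a, d}`
  set A := exp (u * a) * (1 - u * a + K * a ^ 2)
  set B := exp (u * a) * (u - 2 * K * a)
  set C := exp (u * a) * K
  have hquad : (fun ω => exp (u * Y ω)) ≤ᵐ[μ] fun ω => A + B * Y ω + C * Y ω ^ 2 := by
    filter_upwards [hbound] with ω hω
    have hx : u * (Y ω - a) ≤ u * (d - a) := by gcongr; exact (abs_le.1 hω).2
    calc exp (u * Y ω) = exp (u * a) * exp (u * (Y ω - a)) := by rw [← exp_add]; ring_nf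
      _ ≤ exp (u * a) * (1 + u * (Y ω - a) + (u * (Y ω - a)) ^ 2 *
            expRemainderCoeff (u * (d - a))) := by
          gcongr; exact exp_le_one_add_add_sq_mul_expRemainderCoeff hx
      _ = _ := by ring
  have hmono : μ[fun ω => exp (u * Y ω) | m] ≤ᵐ[μ] μ[fun ω => A + B * Y ω + C * Y ω ^ 2 | m] :=
    condExp_mono hexp (((integrable_const A).add (hY1.const_mul B)).add (hY2.const_mul C)) hquad
  have hd_exp : exp (u * d) = exp (u * a) * (1 + u * (d - a) + (d - a) ^ 2 * K) := by
    rw [show u * d = u * a + u * (d - a) by ring, exp_add,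
      exp_eq_one_add_add_sq_mul_expRemainderCoeff (u * (d - a))]
    ring
  have hbennett : exp (u * a) * (1 - u * a + K * (a ^ 2 + σ ^ 2)) = bennettBound d σ u := by
    rw [bennettBound, hd_exp, show -(u * σ ^ 2 / d) = u * a by ring]
    simp only [a]
    field_simp
    ring
  filter_upwards [hmono, condExp_const_add_mul_add_mul_sq hm hY1 hY2 A B C, hmean, hvar]
    with ω hmono hlin hmean hvar
  rw [hlin, hmean, Pi.zero_apply] at hmono
  rw [← hbennett]
  calc _ ≤ A + C * μ[fun ω => Y ω ^ 2 | m] ω := by simpa using hmono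
    _ ≤ A + C * σ ^ 2 := by gcongr
    _ = _ := by ring

end CondExp

section Increments

variable {Ω : Type*} {m0 : MeasurableSpace Ω} {μ : Measure Ω} {ℱ : Filtration ℕ m0}

lemma MeasureTheory.Martingale.condExp_sub_ae_eq_zero {X : ℕ → Ω → ℝ} (hX : Martingale X ℱ μ)
    [SigmaFiniteFiltration μ ℱ] {i j : ℕ} (hij : i ≤ j) : μ[X j - X i | ℱ i] =ᵐ[μ] 0 := by
  filter_upwards [condExp_sub (hX.integrable j) (hX.integrable i) (ℱ i), hX.condExp_ae_eq hij]
    with ω hsub hj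
  rw [hsub, Pi.sub_apply, hj, condExp_of_stronglyMeasurable (ℱ.le i) (hX.stronglyMeasurable i)
    (hX.integrable i), sub_self, Pi.zero_apply]

lemma ae_le_mul_of_forall_sub_le {S : ℕ → Ω → ℝ} (hS0 : S 0 = 0) {c : ℝ} {n : ℕ}
    (hinc : ∀ k < n, ∀ᵐ ω ∂μ, S (k + 1) ω - S k ω ≤ c) : ∀ k ≤ n, ∀ᵐ ω ∂μ, S k ω ≤ k * c := by
  intro k hk
  induction k with
  | zero => simp [hS0]
  | succ k ih =>
    filter_upwards [ih (by omega), hinc k (by omega)] with ω hk hinc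
    push_cast
    linarith

lemma integral_exp_le_pow_of_condExp_exp_sub_le [IsProbabilityMeasure μ] {S : ℕ → Ω → ℝ}
    (hS : StronglyAdapted ℱ S) (hS0 : S 0 = 0) {c M : ℝ} (hM : 0 ≤ M) {n : ℕ}
    (hinc : ∀ k < n, ∀ᵐ ω ∂μ, S (k + 1) ω - S k ω ≤ c)
    (hstep : ∀ k < n, ∀ᵐ ω ∂μ, μ[fun ω => exp (S (k + 1) ω - S k ω) | ℱ k] ω ≤ M) :
    Integrable (fun ω => exp (S n ω)) μ ∧ ∫ ω, exp (S n ω) ∂μ ≤ M ^ n := by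
  have hSm (k : ℕ) : Measurable (S k) := ((hS k).mono (ℱ.le k)).measurable
  have hmeas (k : ℕ) : StronglyMeasurable[ℱ k] fun ω => exp (S k ω) :=
    ((hS k).measurable.exp).stronglyMeasurable
  have hint (k : ℕ) (hk : k ≤ n) : Integrable (fun ω => exp (S k ω)) μ :=
    .of_bound ((hmeas k).mono (ℱ.le k)).aestronglyMeasurable (exp (k * c)) <| by
      filter_upwards [ae_le_mul_of_forall_sub_le hS0 hinc k hk] with ω hω
      rwa [norm_of_nonneg (exp_nonneg _), exp_le_exp]
  refine ⟨hint n le_rfl, ?_⟩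
  induction n with
  | zero => simp [hS0]
  | succ k ih =>
    have hprod : (fun ω => exp (S (k + 1) ω)) =
        (fun ω => exp (S k ω)) * fun ω => exp (S (k + 1) ω - S k ω) := by
      ext ω; simp [← exp_add]
    have hinc_int : Integrable (fun ω => exp (S (k + 1) ω - S k ω)) μ :=
      .of_bound ((hSm (k + 1)).sub (hSm k)).exp.aestronglyMeasurable (exp c) <| by
        filter_upwards [hinc k (by omega)] with ω hω
        rwa [norm_of_nonneg (exp_nonneg _), exp_le_exp]
    have hpull := condExp_mul_of_stronglyMeasurable_left (μ := μ) (hmeas k)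
      (hprod ▸ hint (k + 1) le_rfl) hinc_int
    calc ∫ ω, exp (S (k + 1) ω) ∂μ
        = ∫ ω, μ[fun ω => exp (S (k + 1) ω) | ℱ k] ω ∂μ := (integral_condExp (ℱ.le k)).symm
      _ ≤ ∫ ω, exp (S k ω) * M ∂μ := by
        refine integral_mono_ae integrable_condExp ((hint k (by omega)).mul_const M) ?_
        filter_upwards [hpull, hstep k (by omega)] with ω hpull hstep
        rw [hprod, hpull, Pi.mul_apply]
        gcongr
      _ = (∫ ω, exp (S k ω) ∂μ) * M := integral_mul_const M _
      _ ≤ M ^ k * M := by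
        gcongr
        exact ih (fun j hj => hinc j (by omega)) (fun j hj => hstep j (by omega))
          (fun j hj => hint j (by omega))
      _ = M ^ (k + 1) := (pow_succ M k).symm

end Increments

section Martingale

variable {Ω : Type*} {m0 : MeasurableSpace Ω} {μ : Measure Ω} [IsProbabilityMeasure μ]
  {ℱ : Filtration ℕ m0} {X : ℕ → Ω → ℝ} {n : ℕ} {d σ u : ℝ}

lemma MeasureTheory.Martingale.integral_exp_mul_sub_le_bennettBound_pow (hX : Martingale X ℱ μ)
    (hd : 0 < d) (hu : 0 ≤ u) (hjump : ∀ k < n, ∀ᵐ ω ∂μ, |X (k + 1) ω - X k ω| ≤ d)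
    (hvar : ∀ k < n, ∀ᵐ ω ∂μ, μ[fun ω => (X (k + 1) ω - X k ω) ^ 2 | ℱ k] ω ≤ σ ^ 2) :
    Integrable (fun ω => exp (u * (X n ω - X 0 ω))) μ ∧
      ∫ ω, exp (u * (X n ω - X 0 ω)) ∂μ ≤ bennettBound d σ u ^ n := by
  have hincr (k : ℕ) (ω : Ω) :
      u * (X (k + 1) ω - X 0 ω) - u * (X k ω - X 0 ω) = u * (X (k + 1) ω - X k ω) := by
    ring
  refine integral_exp_le_pow_of_condExp_exp_sub_le (S := fun k ω => u * (X k ω - X 0 ω))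
    (c := u * d) (fun k => ((hX.stronglyMeasurable k).sub
      ((hX.stronglyMeasurable 0).mono (ℱ.mono k.zero_le))).const_mul u)
    (by ext; simp) (by unfold bennettBound; positivity) (fun k hk => ?_) (fun k hk => ?_)
  · filter_upwards [hjump k hk] with ω hω
    rw [hincr]
    exact mul_le_mul_of_nonneg_left (abs_le.1 hω).2 hu
  · simp only [hincr]
    exact condExp_exp_mul_le_bennettBound (ℱ.le k)
      (((hX.integrable (k + 1)).sub (hX.integrable k)).aestronglyMeasurable) hd hu (hjump k hk)
      (hX.condExp_sub_ae_eq_zero k.le_succ) (hvar k hk)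

lemma MeasureTheory.Martingale.measureReal_sub_ge_le (hX : Martingale X ℱ μ) (hd : 0 < d)
    (hu : 0 ≤ u) (hjump : ∀ k < n, ∀ᵐ ω ∂μ, |X (k + 1) ω - X k ω| ≤ d)
    (hvar : ∀ k < n, ∀ᵐ ω ∂μ, μ[fun ω => (X (k + 1) ω - X k ω) ^ 2 | ℱ k] ω ≤ σ ^ 2) (α : ℝ) :
    μ.real {ω | n * α ≤ X n ω - X 0 ω} ≤ (exp (-(u * α)) * bennettBound d σ u) ^ n := by
  obtain ⟨hint, hmgf⟩ := hX.integral_exp_mul_sub_le_bennettBound_pow hd hu hjump hvar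
  calc μ.real {ω | n * α ≤ X n ω - X 0 ω}
      ≤ exp (-u * (n * α)) * mgf (fun ω => X n ω - X 0 ω) μ u :=
        measure_ge_le_exp_mul_mgf _ hu hint
    _ ≤ exp (-u * (n * α)) * bennettBound d σ u ^ n := by gcongr; exact hmgf
    _ = _ := by rw [mul_pow, ← exp_nat_mul]; ring_nf

end Martingale

/-- `e^{-ts} 𝔼[e^{tB}]` for `B ~ Bernoulli(p)`. -/
noncomputable def bernoulliChernoff (p s t : ℝ) : ℝ := exp (-(t * s)) * (1 - p + p * exp t)

lemma binKL_one_left (p : ℝ) : binKL 1 p = -log p := by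
  simp [binKL, log_inv]

lemma tendsto_bernoulliChernoff_one (p : ℝ) :
    Tendsto (bernoulliChernoff p 1) atTop (𝓝 p) := by
  have h : Tendsto (fun t => (1 - p) * exp (-t) + p) atTop (𝓝 ((1 - p) * 0 + p)) :=
    (tendsto_exp_neg_atTop_nhds_zero.const_mul _).add_const _
  rw [mul_zero, zero_add] at h
  refine h.congr fun t => ?_
  rw [bernoulliChernoff, mul_one, exp_neg]
  field_simp

lemma bernoulliChernoff_log_eq {p s : ℝ} (hp0 : 0 < p) (hp1 : p < 1) (hs0 : 0 < s) (hs1 : s < 1) :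
    bernoulliChernoff p s (log (s * (1 - p) / ((1 - s) * p))) = exp (-binKL s p) := by
  have hp1' : 0 < 1 - p := sub_pos.2 hp1
  have hs1' : 0 < 1 - s := sub_pos.2 hs1
  have hmgf : 1 - p + p * exp (log (s * (1 - p) / ((1 - s) * p))) =
      exp (log (1 - p) - log (1 - s)) := by
    rw [exp_log (by positivity), exp_sub, exp_log hp1', exp_log hs1']
    field_simp
    ring
  rw [bernoulliChernoff, hmgf, ← exp_add, binKL, log_div hs0.ne' hp0.ne',
    log_div hs1'.ne' hp1'.ne', log_div (by positivity) (by positivity),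
    log_mul hs0.ne' hp1'.ne', log_mul hs1'.ne' hp0.ne']
  ring_nf

lemma le_exp_neg_mul_binKL_of_forall_le {c p s : ℝ} (n : ℕ) (hp0 : 0 < p) (hp1 : p < 1)
    (hps : p ≤ s) (hs1 : s ≤ 1) (h : ∀ t, 0 ≤ t → c ≤ bernoulliChernoff p s t ^ n) :
    c ≤ exp (-(n : ℝ) * binKL s p) := by
  rcases hs1.eq_or_lt with rfl | hs1
  · rw [binKL_one_left, neg_mul_neg, exp_nat_mul, exp_log hp0]
    exact ge_of_tendsto ((tendsto_bernoulliChernoff_one p).pow n)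
      ((eventually_ge_atTop 0).mono h)
  · have hs0 : 0 < s := hp0.trans_le hps
    -- the optimal `t`
    have htilt : 0 ≤ log (s * (1 - p) / ((1 - s) * p)) := by
      refine log_nonneg ((one_le_div (by nlinarith)).2 ?_)
      nlinarith
    have := h _ htilt
    rwa [bernoulliChernoff_log_eq hp0 hp1 hs0 hs1, ← exp_nat_mul, mul_neg, ← neg_mul] at this

lemma exp_neg_mul_mul_bennettBound_eq {d : ℝ} (hd : 0 < d) (α σ t : ℝ) :
    exp (-(t * d / (d ^ 2 + σ ^ 2) * α)) * bennettBound d σ (t * d / (d ^ 2 + σ ^ 2)) =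
      bernoulliChernoff ((σ ^ 2 / d ^ 2) / (1 + σ ^ 2 / d ^ 2))
        ((α / d + σ ^ 2 / d ^ 2) / (1 + σ ^ 2 / d ^ 2)) t := by
  set u := t * d / (d ^ 2 + σ ^ 2)
  set p := (σ ^ 2 / d ^ 2) / (1 + σ ^ 2 / d ^ 2)
  set s := (α / d + σ ^ 2 / d ^ 2) / (1 + σ ^ 2 / d ^ 2)
  have hsplit : bernoulliChernoff p s t = (1 - p) * exp (-(t * s)) + p * exp (-(t * s) + t) := by
    rw [bernoulliChernoff, exp_add]; ring
  have hlow : -(t * s) = -(u * α) + -(u * σ ^ 2 / d) := by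
    simp only [u, s]; field_simp; ring
  have hhigh : -(t * s) + t = -(u * α) + u * d := by
    simp only [u, s]; field_simp; ring
  rw [hsplit, hhigh, hlow, bennettBound, exp_add, exp_add]
  simp only [p]
  field_simp
  ring

/-- refined Azuma–Hoeffding inequality (one-sided) for martingales with
bounded jumps and bounded conditional variance. -/
theorem stmt_0 {Ω : Type*} {m0 : MeasurableSpace Ω} {μ : Measure Ω} [IsProbabilityMeasure μ]
    (ℱ : Filtration ℕ m0) (X : ℕ → Ω → ℝ) (hmart : Martingale X ℱ μ)
    (n : ℕ) (d σ : ℝ) (hd : 0 < d) (hσ : 0 < σ)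
    (hjump : ∀ k, 1 ≤ k → k ≤ n → ∀ᵐ ω ∂μ, |X k ω - X (k - 1) ω| ≤ d)
    (hvar : ∀ k, 1 ≤ k → k ≤ n →
      ∀ᵐ ω ∂μ, (μ[fun ω => (X k ω - X (k - 1) ω) ^ 2 | ℱ (k - 1)]) ω ≤ σ ^ 2)
    (α : ℝ) (hα : 0 ≤ α) (hδ : α / d ≤ 1) :
    (μ {ω | (n : ℝ) * α ≤ X n ω - X 0 ω}).toReal ≤
      Real.exp (-(n : ℝ) *
        binKL ((α / d + σ ^ 2 / d ^ 2) / (1 + σ ^ 2 / d ^ 2))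
          ((σ ^ 2 / d ^ 2) / (1 + σ ^ 2 / d ^ 2))) := by
  have hjump' : ∀ k < n, ∀ᵐ ω ∂μ, |X (k + 1) ω - X k ω| ≤ d := fun k hk => by
    simpa using hjump (k + 1) (by omega) hk
  have hvar' : ∀ k < n, ∀ᵐ ω ∂μ, μ[fun ω => (X (k + 1) ω - X k ω) ^ 2 | ℱ k] ω ≤ σ ^ 2 :=
    fun k hk => by simpa using hvar (k + 1) (by omega) hk
  have hγ : 0 < σ ^ 2 / d ^ 2 := by positivity
  have hδ0 : 0 ≤ α / d := div_nonneg hα hd.le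
  refine le_exp_neg_mul_binKL_of_forall_le n (by positivity) ((div_lt_one (by positivity)).2
    (by linarith)) (by gcongr; linarith) ((div_le_one (by positivity)).2 (by linarith))
    fun t ht => ?_
  rw [← exp_neg_mul_mul_bennettBound_eq hd]
  exact hmart.measureReal_sub_ge_le hd (by positivity) hjump' hvar' α
end

section
/- Let $X$ be a real-valued random variable with $\mathbb{E}[X] = 0$, $\mathbb{E}[X^2] \le \sigma^2$ for some $\sigma > 0$, and $X \le d$ almost surely for some $d > 0$. Then for every $t \ge 0$, $\mathbb{E}[e^{tX}] \le \frac{\sigma^2 e^{td} + d^2 e^{-t\sigma^2/d}}{d^2 + \sigma^2}$. -/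
/-!
With `c = σ² / d`, the quadratic in `x` that is tangent to `e^{tx}` at `x = -c` and meets it at
`x = d` dominates `e^{tx}` on `(-∞, d]`; this is the monotonicity of `(e^u - 1 - u) / u²`.
Integrating it against the law of `X` leaves only its constant term and `E[X²] ≤ σ²` times its
nonnegative leading coefficient, and the choice of `c` makes this exactly the bound of the
two-point law on `{-c, d}` with mean `0` and variance `σ²`.
-/

open MeasureTheory Real

lemma Real.exp_sub_one_sub_eq_sq_mul_integral (x : ℝ) :
    exp x - 1 - x = x ^ 2 * ∫ s in (0 : ℝ)..1, (1 - s) * exp (s * x) := by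
  rcases eq_or_ne x 0 with rfl | hx
  · simp
  have hderiv : ∀ s ∈ Set.uIcc (0 : ℝ) 1,
      HasDerivAt (fun s => exp (s * x) * ((x + 1) / x ^ 2 - s / x)) ((1 - s) * exp (s * x)) s := by
    intro s _
    have hexp : HasDerivAt (fun s => exp (s * x)) (exp (s * x) * x) s :=
      ((hasDerivAt_id s).mul_const x).exp.congr_deriv (by simp)
    have hlin : HasDerivAt (fun s => (x + 1) / x ^ 2 - s / x) (-(1 / x)) s := by
      simpa using ((hasDerivAt_id s).div_const x).const_sub ((x + 1) / x ^ 2)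
    refine (hexp.mul hlin).congr_deriv ?_
    field_simp
    ring
  rw [intervalIntegral.integral_eq_sub_of_hasDerivAt hderiv
    ((by fun_prop : Continuous _).intervalIntegrable _ _)]
  field_simp
  simp
  ring

lemma Real.monotone_integral_one_sub_mul_exp :
    Monotone fun x : ℝ => ∫ s in (0 : ℝ)..1, (1 - s) * exp (s * x) := by
  intro u v huv
  refine intervalIntegral.integral_mono_on zero_le_one
    ((by fun_prop : Continuous _).intervalIntegrable _ _)
    ((by fun_prop : Continuous _).intervalIntegrable _ _) fun s hs => ?_
  have hs' : 0 ≤ 1 - s := by linarith [hs.2]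
  gcongr
  exact hs.1

lemma Real.exp_mul_le_of_le {t a b : ℝ} (ht : 0 ≤ t) (hab : a ≤ b) (hb : b ≠ 0) :
    exp (t * a) ≤ 1 + t * a + (a / b) ^ 2 * (exp (t * b) - 1 - t * b) := by
  have hmono := monotone_integral_one_sub_mul_exp (mul_le_mul_of_nonneg_left hab ht)
  have hrem : exp (t * a) - 1 - t * a ≤ (a / b) ^ 2 * (exp (t * b) - 1 - t * b) := by
    rw [exp_sub_one_sub_eq_sq_mul_integral, exp_sub_one_sub_eq_sq_mul_integral]
    calc (t * a) ^ 2 * ∫ s in (0 : ℝ)..1, (1 - s) * exp (s * (t * a))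
        ≤ (t * a) ^ 2 * ∫ s in (0 : ℝ)..1, (1 - s) * exp (s * (t * b)) := by gcongr
      _ = (a / b) ^ 2 * ((t * b) ^ 2 * ∫ s in (0 : ℝ)..1, (1 - s) * exp (s * (t * b))) := by
        rw [← mul_assoc, show (a / b) ^ 2 * (t * b) ^ 2 = (t * a) ^ 2 by field_simp]
  linarith

lemma integral_le_of_ae_le_quadratic {Ω : Type*} [MeasurableSpace Ω] {μ : Measure Ω}
    [IsProbabilityMeasure μ] {X f : Ω → ℝ} {α β γ v : ℝ} (hf : 0 ≤ᵐ[μ] f)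
    (hle : ∀ᵐ ω ∂μ, f ω ≤ α + β * X ω + γ * X ω ^ 2) (hγ : 0 ≤ γ)
    (hX1 : Integrable X μ) (hmean : ∫ ω, X ω ∂μ = 0)
    (hX2 : Integrable (fun ω => X ω ^ 2) μ) (hvar : ∫ ω, X ω ^ 2 ∂μ ≤ v) :
    ∫ ω, f ω ∂μ ≤ α + γ * v := by
  have hlin : Integrable (fun ω => α + β * X ω) μ := (integrable_const α).add (hX1.const_mul β)
  calc ∫ ω, f ω ∂μ ≤ ∫ ω, (α + β * X ω + γ * X ω ^ 2) ∂μ :=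
        integral_mono_of_nonneg hf (hlin.add (hX2.const_mul γ)) hle
    _ = α + γ * ∫ ω, X ω ^ 2 ∂μ := by
        rw [integral_add hlin (hX2.const_mul γ), integral_add (integrable_const α)
          (hX1.const_mul β), integral_const, integral_const_mul, integral_const_mul, hmean]
        simp
    _ ≤ α + γ * v := by gcongr

theorem stmt_1_general {Ω : Type*} [MeasurableSpace Ω] (μ : Measure Ω) [IsProbabilityMeasure μ]
    (X : Ω → ℝ) (d σ : ℝ) (hd : 0 < d)
    (hX1 : Integrable X μ) (hmean : ∫ ω, X ω ∂μ = 0)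
    (hX2 : Integrable (fun ω => X ω ^ 2) μ) (hvar : ∫ ω, X ω ^ 2 ∂μ ≤ σ ^ 2)
    (hbd : ∀ᵐ ω ∂μ, X ω ≤ d) (t : ℝ) (ht : 0 ≤ t) :
    ∫ ω, Real.exp (t * X ω) ∂μ ≤
      (σ ^ 2 * Real.exp (t * d) + d ^ 2 * Real.exp (-t * σ ^ 2 / d)) / (d ^ 2 + σ ^ 2) := by
  set c := σ ^ 2 / d with hc
  have hdc : 0 < d + c := by positivity
  set K := exp (t * (d + c)) - 1 - t * (d + c) with hK
  have hK_nonneg : 0 ≤ K := by linarith [add_one_le_exp (t * (d + c))]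
  set γ := exp (-(t * c)) * K / (d + c) ^ 2 with hγ
  have hpt : ∀ᵐ ω ∂μ, exp (t * X ω) ≤ (exp (-(t * c)) * (1 + t * c) + γ * c ^ 2)
      + (exp (-(t * c)) * t + 2 * γ * c) * X ω + γ * X ω ^ 2 := by
    filter_upwards [hbd] with ω hω
    have hmaj := exp_mul_le_of_le ht (by linarith : X ω + c ≤ d + c) hdc.ne'
    calc exp (t * X ω) = exp (-(t * c)) * exp (t * (X ω + c)) := by rw [← exp_add]; ring_nf
      _ ≤ exp (-(t * c)) * (1 + t * (X ω + c) + ((X ω + c) / (d + c)) ^ 2 * K) := by gcongr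
      _ = _ := by rw [hγ]; field_simp; ring
  have hexp_d : exp (t * d) = exp (-(t * c)) * (K + 1 + t * (d + c)) := by
    rw [show K + 1 + t * (d + c) = exp (t * (d + c)) by rw [hK]; ring, ← exp_add]
    ring_nf
  calc ∫ ω, exp (t * X ω) ∂μ ≤ exp (-(t * c)) * (1 + t * c) + γ * c ^ 2 + γ * σ ^ 2 :=
        integral_le_of_ae_le_quadratic (ae_of_all _ fun _ => (exp_pos _).le) hpt (by positivity)
          hX1 hmean hX2 hvar
    _ = _ := by
      rw [hexp_d, show -t * σ ^ 2 / d = -(t * c) by ring, hγ, hc]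
      field_simp
      ring

/-- Bennett's inequality for the moment generating function. -/
theorem stmt_1 {Ω : Type*} [MeasurableSpace Ω] (μ : Measure Ω) [IsProbabilityMeasure μ]
    (X : Ω → ℝ) (d σ : ℝ) (hd : 0 < d) (hσ : 0 < σ)
    (hX1 : Integrable X μ) (hmean : ∫ ω, X ω ∂μ = 0)
    (hX2 : Integrable (fun ω => X ω ^ 2) μ) (hvar : ∫ ω, X ω ^ 2 ∂μ ≤ σ ^ 2)
    (hbd : ∀ᵐ ω ∂μ, X ω ≤ d) (t : ℝ) (ht : 0 ≤ t) :
    ∫ ω, Real.exp (t * X ω) ∂μ ≤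
      (σ ^ 2 * Real.exp (t * d) + d ^ 2 * Real.exp (-t * σ ^ 2 / d)) / (d ^ 2 + σ ^ 2) :=
  stmt_1_general μ X d σ hd hX1 hmean hX2 hvar hbd t ht
end

section
/- Let $\{X_k, \mathcal{F}_k\}_{k=0}^n$ be a real-valued martingale with $|X_k - X_{k-1}| \le d$ almost surely for every $k \in \{1,\dots,n\}$, for some $d > 0$. Then for every $\alpha \ge 0$ with $\delta = \alpha/d \le 1$, $\Pr(|X_n - X_0| \ge \alpha n) \le 2\exp(-n f(\delta))$ where $f(\delta) = \ln 2 \cdot (1 - h_2((1-\delta)/2))$ and $h_2$ is the binary entropy function to base 2. -/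
open MeasureTheory

/-- Binary entropy function to base 2. -/
noncomputable def binEnt2 (x : ℝ) : ℝ := -(x * Real.logb 2 x) - (1 - x) * Real.logb 2 (1 - x)

/-!
On `[-d, d]` the convex function `y ↦ exp (t y)` lies below its chord
`cosh (t d) + (sinh (t d) / d) y`, and the linear part of the chord integrates to zero against
any past-measurable weight, since martingale increments are orthogonal to the past. Hence each
step multiplies the moment generating function of `X n - X 0` by at most `cosh (t d)`, and
Chernoff's bound on both tails gives `2 (exp (-t α) cosh (t d)) ^ n` for every `t ≥ 0`.
With `p = (1 - δ) / 2`, the choice `t d = ½ log ((1 - p) / p)` makes the base equal to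
`exp (H p - log 2)`, where `H` is the binary entropy in nats; for `δ = 1` this value is only
approached as `t → ∞`, so the bound is passed to the closure of the attainable bases.
-/

open ProbabilityTheory Real Filter Set Topology

lemma binEnt2_eq_binEntropy_div_log_two (p : ℝ) : binEnt2 p = binEntropy p / log 2 := by
  simp only [binEnt2, binEntropy, logb, log_inv]
  ring

lemma exp_mul_le_cosh_add_sinh_div_mul {t d y : ℝ} (hd : 0 < d) (hy : |y| ≤ d) :
    exp (t * y) ≤ cosh (t * d) + sinh (t * d) / d * y := by
  obtain ⟨hy₁, hy₂⟩ := abs_le.mp hy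
  have hconv := convexOn_exp.2 (mem_univ (t * d)) (mem_univ (-(t * d)))
    (div_nonneg (by linarith : 0 ≤ d + y) (by linarith : 0 ≤ 2 * d))
    (div_nonneg (by linarith : 0 ≤ d - y) (by linarith : 0 ≤ 2 * d))
    (by field_simp; ring)
  simp only [smul_eq_mul] at hconv
  refine le_of_eq_of_le ?_ (hconv.trans_eq ?_)
  · congr 1; field_simp; ring
  · rw [cosh_eq, sinh_eq]; field_simp; ring

lemma exp_neg_mul_cosh_half_log_odds {p : ℝ} (hp₀ : 0 < p) (hp₁ : p < 1) :
    exp (-((1 - 2 * p) * ((log (1 - p) - log p) / 2))) * cosh ((log (1 - p) - log p) / 2) =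
      exp (binEntropy p - log 2) := by
  have hq : 0 < 1 - p := by linarith
  have hH : binEntropy p = -(p * log p) - (1 - p) * log (1 - p) := by
    simp only [binEntropy, log_inv]; ring
  rw [cosh_eq, mul_div_assoc', mul_add, ← exp_add, ← exp_add, hH, exp_sub, exp_log two_pos]
  have h₁ : -((1 - 2 * p) * ((log (1 - p) - log p) / 2)) + (log (1 - p) - log p) / 2 =
      (-(p * log p) - (1 - p) * log (1 - p)) + log (1 - p) := by ring
  have h₂ : -((1 - 2 * p) * ((log (1 - p) - log p) / 2)) + -((log (1 - p) - log p) / 2) =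
      (-(p * log p) - (1 - p) * log (1 - p)) + log p := by ring
  rw [h₁, h₂, exp_add, exp_add, exp_log hq, exp_log hp₀]
  ring

lemma tendsto_exp_neg_mul_cosh : Tendsto (fun s => exp (-s) * cosh s) atTop (𝓝 (1 / 2)) := by
  have h : Tendsto (fun s : ℝ => (1 + exp (-(2 * s))) / 2) atTop (𝓝 ((1 + 0) / 2)) :=
    ((tendsto_exp_atBot.comp (tendsto_neg_atTop_atBot.comp
      (tendsto_id.const_mul_atTop two_pos))).const_add 1).div_const 2
  rw [add_zero] at h
  refine h.congr fun s => ?_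
  rw [cosh_eq, mul_div_assoc', mul_add, ← exp_add, ← exp_add, neg_add_cancel, exp_zero,
    ← neg_add, ← two_mul]

lemma exp_binEntropy_sub_log_two_mem_closure {δ : ℝ} (hδ₀ : 0 ≤ δ) (hδ₁ : δ ≤ 1) :
    exp (binEntropy ((1 - δ) / 2) - log 2) ∈
      closure ((fun s => exp (-(δ * s)) * cosh s) '' Ici 0) := by
  rcases hδ₁.lt_or_eq with hδ₁ | rfl
  · set p := (1 - δ) / 2
    have hδ : δ = 1 - 2 * p := by ring
    refine subset_closure ⟨(log (1 - p) - log p) / 2, ?_, ?_⟩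
    · exact div_nonneg (sub_nonneg.2 (log_le_log (by linarith) (by linarith))) zero_le_two
    · rw [hδ]
      exact exp_neg_mul_cosh_half_log_odds (by linarith) (by linarith)
  · have hhalf : exp (binEntropy ((1 - 1) / 2) - log 2) = 1 / 2 := by
      rw [sub_self, zero_div, binEntropy_zero, zero_sub, exp_neg, exp_log two_pos, one_div]
    rw [hhalf]
    refine mem_closure_of_tendsto tendsto_exp_neg_mul_cosh ?_
    filter_upwards [eventually_ge_atTop 0] with s hs
    exact ⟨s, hs, by simp⟩

lemma measureReal_le_abs_le_exp_mul_mgf_add {Ω : Type*} {m0 : MeasurableSpace Ω}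
    {μ : Measure Ω} [IsFiniteMeasure μ] {S : Ω → ℝ} (ε : ℝ) {t : ℝ} (ht : 0 ≤ t)
    (hpos : Integrable (fun ω => exp (t * S ω)) μ)
    (hneg : Integrable (fun ω => exp (-t * S ω)) μ) :
    μ.real {ω | ε ≤ |S ω|} ≤ exp (-t * ε) * (mgf S μ t + mgf S μ (-t)) := by
  have hsplit : {ω | ε ≤ |S ω|} = {ω | ε ≤ S ω} ∪ {ω | S ω ≤ -ε} := by
    ext ω; simp only [mem_union, mem_ofPred_eq, le_abs', or_comm]
  calc μ.real {ω | ε ≤ |S ω|} ≤ μ.real {ω | ε ≤ S ω} + μ.real {ω | S ω ≤ -ε} :=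
        hsplit ▸ measureReal_union_le _ _
    _ ≤ exp (-t * ε) * mgf S μ t + exp (-(-t) * -ε) * mgf S μ (-t) :=
        add_le_add (measure_ge_le_exp_mul_mgf ε ht hpos)
          (measure_le_le_exp_mul_mgf (-ε) (neg_nonpos.2 ht) hneg)
    _ = exp (-t * ε) * (mgf S μ t + mgf S μ (-t)) := by ring_nf

namespace MeasureTheory

variable {Ω : Type*} {m0 : MeasurableSpace Ω} {μ : Measure Ω} {X : ℕ → Ω → ℝ} {n : ℕ} {d : ℝ}

lemma integrable_exp_mul_sub_zero [IsFiniteMeasure μ] (hX : ∀ k, AEStronglyMeasurable (X k) μ)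
    (hjump : ∀ k < n, ∀ᵐ ω ∂μ, |X (k + 1) ω - X k ω| ≤ d) (t : ℝ) :
    Integrable (fun ω => exp (t * (X n ω - X 0 ω))) μ := by
  induction n with
  | zero => simp
  | succ n ih =>
    have hstep : AEStronglyMeasurable (fun ω => exp (t * (X (n + 1) ω - X n ω))) μ := by
      fun_prop
    have hbound : ∀ᵐ ω ∂μ, ‖exp (t * (X (n + 1) ω - X n ω))‖ ≤ exp (|t| * d) := by
      filter_upwards [hjump n n.lt_succ_self] with ω hω
      rw [norm_of_nonneg (exp_nonneg _), exp_le_exp]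
      exact (le_abs_self _).trans (by rw [abs_mul]; gcongr)
    refine ((ih fun k hk => hjump k (hk.trans n.lt_succ_self)).bdd_mul hstep hbound).congr ?_
    filter_upwards with ω
    rw [← exp_add]
    ring_nf

variable {ℱ : Filtration ℕ m0}

lemma Martingale.integral_mul_sub_eq_zero [IsFiniteMeasure μ] (hX : Martingale X ℱ μ) {i j : ℕ}
    (hij : i ≤ j) {Z : Ω → ℝ} (hZ : StronglyMeasurable[ℱ i] Z)
    (hZX : Integrable (Z * (X j - X i)) μ) :
    ∫ ω, Z ω * (X j ω - X i ω) ∂μ = 0 := by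
  have hcond : μ[X j - X i | ℱ i] =ᵐ[μ] 0 := by
    filter_upwards [condExp_sub (hX.integrable j) (hX.integrable i) (ℱ i), hX.condExp_ae_eq hij,
      hX.condExp_ae_eq (le_refl i)] with ω h hj hi
    simp [h, hj, hi]
  calc ∫ ω, Z ω * (X j ω - X i ω) ∂μ = ∫ ω, μ[Z * (X j - X i) | ℱ i] ω ∂μ :=
        (integral_condExp (ℱ.le i)).symm
    _ = 0 := by
      rw [integral_eq_zero_of_ae]
      filter_upwards [condExp_mul_of_stronglyMeasurable_left hZ hZX
        ((hX.integrable j).sub (hX.integrable i)), hcond] with ω h h0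
      simp [h, h0]

lemma Martingale.integral_mul_exp_increment_le [IsFiniteMeasure μ] (hX : Martingale X ℱ μ)
    (hd : 0 < d) {m : ℕ} (hjump : ∀ᵐ ω ∂μ, |X (m + 1) ω - X m ω| ≤ d) {Z : Ω → ℝ}
    (hZ : StronglyMeasurable[ℱ m] Z) (hZ₀ : 0 ≤ Z) (hZi : Integrable Z μ) (t : ℝ) :
    ∫ ω, Z ω * exp (t * (X (m + 1) ω - X m ω)) ∂μ ≤ cosh (t * d) * ∫ ω, Z ω ∂μ := by
  have hZY : Integrable (fun ω => Z ω * (X (m + 1) ω - X m ω)) μ :=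
    hZi.mul_bdd ((hX.integrable _).sub (hX.integrable _)).aestronglyMeasurable hjump
  have hchord : ∀ᵐ ω ∂μ, Z ω * exp (t * (X (m + 1) ω - X m ω)) ≤
      cosh (t * d) * Z ω + sinh (t * d) / d * (Z ω * (X (m + 1) ω - X m ω)) := by
    filter_upwards [hjump] with ω hω
    calc Z ω * exp (t * (X (m + 1) ω - X m ω))
        ≤ Z ω * (cosh (t * d) + sinh (t * d) / d * (X (m + 1) ω - X m ω)) :=
          mul_le_mul_of_nonneg_left (exp_mul_le_cosh_add_sinh_div_mul hd hω) (hZ₀ ω)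
      _ = _ := by ring
  calc ∫ ω, Z ω * exp (t * (X (m + 1) ω - X m ω)) ∂μ
      ≤ ∫ ω, (cosh (t * d) * Z ω + sinh (t * d) / d * (Z ω * (X (m + 1) ω - X m ω))) ∂μ :=
        integral_mono_of_nonneg (ae_of_all _ fun ω => mul_nonneg (hZ₀ ω) (exp_nonneg _))
          ((hZi.const_mul _).add (hZY.const_mul _)) hchord
    _ = cosh (t * d) * ∫ ω, Z ω ∂μ +
          sinh (t * d) / d * ∫ ω, Z ω * (X (m + 1) ω - X m ω) ∂μ := by
        rw [integral_add (hZi.const_mul _) (hZY.const_mul _), integral_const_mul,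
          integral_const_mul]
    _ = cosh (t * d) * ∫ ω, Z ω ∂μ := by
        rw [hX.integral_mul_sub_eq_zero m.le_succ hZ hZY, mul_zero, add_zero]

lemma Martingale.mgf_sub_zero_le [IsProbabilityMeasure μ] (hX : Martingale X ℱ μ) (hd : 0 < d)
    (hjump : ∀ k < n, ∀ᵐ ω ∂μ, |X (k + 1) ω - X k ω| ≤ d) (t : ℝ) :
    mgf (fun ω => X n ω - X 0 ω) μ t ≤ cosh (t * d) ^ n := by
  induction n with
  | zero => simp [mgf]
  | succ n ih =>
    have hjump' : ∀ k < n, ∀ᵐ ω ∂μ, |X (k + 1) ω - X k ω| ≤ d :=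
      fun k hk => hjump k (hk.trans n.lt_succ_self)
    have hZ : StronglyMeasurable[ℱ n] fun ω => exp (t * (X n ω - X 0 ω)) :=
      continuous_exp.comp_stronglyMeasurable
        (((hX.stronglyAdapted n).sub ((hX.stronglyAdapted 0).mono (ℱ.mono n.zero_le))).const_mul t)
    calc mgf (fun ω => X (n + 1) ω - X 0 ω) μ t
        = ∫ ω, exp (t * (X n ω - X 0 ω)) * exp (t * (X (n + 1) ω - X n ω)) ∂μ := by
          simp only [mgf, ← exp_add]
          congr with ω
          ring_nf
      _ ≤ cosh (t * d) * mgf (fun ω => X n ω - X 0 ω) μ t :=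
          hX.integral_mul_exp_increment_le hd (hjump n n.lt_succ_self) hZ
            (fun _ => exp_nonneg _)
            (integrable_exp_mul_sub_zero (fun k => (hX.integrable k).1) hjump' t) t
      _ ≤ cosh (t * d) * cosh (t * d) ^ n := by gcongr; exact ih hjump'
      _ = cosh (t * d) ^ (n + 1) := (pow_succ' _ _).symm

lemma Martingale.measureReal_le_abs_sub_zero_le [IsProbabilityMeasure μ] (hX : Martingale X ℱ μ)
    (hd : 0 < d) (hjump : ∀ k < n, ∀ᵐ ω ∂μ, |X (k + 1) ω - X k ω| ≤ d) (ε : ℝ) {t : ℝ}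
    (ht : 0 ≤ t) :
    μ.real {ω | ε ≤ |X n ω - X 0 ω|} ≤ 2 * exp (-t * ε) * cosh (t * d) ^ n := by
  have hint := integrable_exp_mul_sub_zero (fun k => (hX.integrable k).1) hjump
  calc μ.real {ω | ε ≤ |X n ω - X 0 ω|}
      ≤ exp (-t * ε) *
          (mgf (fun ω => X n ω - X 0 ω) μ t + mgf (fun ω => X n ω - X 0 ω) μ (-t)) :=
        measureReal_le_abs_le_exp_mul_mgf_add ε ht (hint t) (hint (-t))
    _ ≤ exp (-t * ε) * (cosh (t * d) ^ n + cosh (t * d) ^ n) := by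
        gcongr
        · exact hX.mgf_sub_zero_le hd hjump t
        · simpa only [neg_mul, cosh_neg] using hX.mgf_sub_zero_le hd hjump (-t)
    _ = 2 * exp (-t * ε) * cosh (t * d) ^ n := by ring

end MeasureTheory

/-- tightened Azuma inequality for martingales with uniformly bounded
jumps, with exponent `f(δ) = ln 2 · (1 - h₂((1-δ)/2))`. -/
theorem stmt_2 {Ω : Type*} {m0 : MeasurableSpace Ω} {μ : Measure Ω} [IsProbabilityMeasure μ]
    (ℱ : Filtration ℕ m0) (X : ℕ → Ω → ℝ) (hmart : Martingale X ℱ μ)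
    (n : ℕ) (d : ℝ) (hd : 0 < d)
    (hjump : ∀ k, 1 ≤ k → k ≤ n → ∀ᵐ ω ∂μ, |X k ω - X (k - 1) ω| ≤ d)
    (α : ℝ) (hα : 0 ≤ α) (hδ : α / d ≤ 1) :
    (μ {ω | (n : ℝ) * α ≤ |X n ω - X 0 ω|}).toReal ≤
      2 * Real.exp (-(n : ℝ) * (Real.log 2 * (1 - binEnt2 ((1 - α / d) / 2)))) := by
  have hjump' : ∀ k < n, ∀ᵐ ω ∂μ, |X (k + 1) ω - X k ω| ≤ d :=
    fun k hk => by simpa using hjump (k + 1) (by omega) hk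
  have hbound : ∀ s ∈ Ici (0 : ℝ),
      μ.real {ω | n * α ≤ |X n ω - X 0 ω|} ≤ 2 * (exp (-(α / d * s)) * cosh s) ^ n := by
    intro s hs
    refine (hmart.measureReal_le_abs_sub_zero_le hd hjump' (n * α)
      (div_nonneg hs hd.le)).trans_eq ?_
    have hexp : -(s / d) * (n * α) = n * -(α / d * s) := by ring
    rw [div_mul_cancel₀ s hd.ne', hexp, exp_nat_mul, mul_pow, mul_assoc]
  have hexponent : -(n : ℝ) * (log 2 * (1 - binEnt2 ((1 - α / d) / 2))) =
      n * (binEntropy ((1 - α / d) / 2) - log 2) := by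
    rw [binEnt2_eq_binEntropy_div_log_two]
    field_simp [(log_pos one_lt_two).ne']
    ring
  have hclosed : IsClosed {y : ℝ | μ.real {ω | n * α ≤ |X n ω - X 0 ω|} ≤ 2 * y ^ n} :=
    isClosed_le continuous_const (by fun_prop)
  rw [← measureReal_def, hexponent, exp_nat_mul]
  refine closure_minimal ?_ hclosed
    (exp_binEntropy_sub_log_two_mem_closure (div_nonneg hα hd.le) hδ)
  exact image_subset_iff.2 hbound
end

section
/- Let $m \in \mathbb{N}$ be even and define $\varphi_m(y) = \frac{m!}{y^m}\left(e^y - \sum_{l=0}^{m-1} \frac{y^l}{l!}\right)$ for $y \ne 0$, with $\varphi_m(0) = 1$. Then: (1) $\lim_{y\to 0}\varphi_m(y) = 1$, so $\varphi_m$ is continuous; (2) $\varphi_m$ is monotonically increasing on $[0,\infty)$; (3) $0 < \varphi_m(y) < 1$ for every $y < 0$; (4) $\varphi_m$ is nonnegative on $\mathbb{R}$. -/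
/-!
Taylor's formula for `s ↦ exp (y * s)` on `[0, 1]` with integral remainder gives
`φₘ(y) = m ∫₀¹ (1 - s)^(m-1) e^(ys) ds`, also at `y = 0`. The right-hand side is continuous in `y`,
positive, strictly increasing (its integrand is), and equal to `1` at `y = 0`.
-/

open Real Set intervalIntegral

lemma iteratedDerivWithin_Icc_exp_const_mul (c : ℝ) (k : ℕ) {a b s : ℝ} (hab : a < b)
    (hs : s ∈ Icc a b) :
    iteratedDerivWithin k (fun t => exp (c * t)) (Icc a b) s = c ^ k * exp (c * s) := by
  rw [iteratedDerivWithin_eq_iteratedDeriv (uniqueDiffOn_Icc hab) (by fun_prop) hs,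
    iteratedDeriv_exp_const_mul]

theorem exp_sub_sum_range_eq_integral (n : ℕ) (y : ℝ) :
    exp y - ∑ l ∈ Finset.range (n + 1), y ^ l / l.factorial =
      y ^ (n + 1) / n.factorial * ∫ s in (0 : ℝ)..1, (1 - s) ^ n * exp (y * s) := by
  have htaylor := taylor_integral_remainder (f := fun s => exp (y * s)) (x₀ := 0) (x := 1) (n := n)
    (by fun_prop)
  rw [uIcc_of_le zero_le_one, taylor_within_apply] at htaylor
  have hsum : ∑ k ∈ Finset.range (n + 1),
      ((k.factorial : ℝ)⁻¹ * (1 - 0) ^ k) • iteratedDerivWithin k (fun t => exp (y * t)) (Icc 0 1) 0 =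
      ∑ l ∈ Finset.range (n + 1), y ^ l / l.factorial := by
    refine Finset.sum_congr rfl fun k _ => ?_
    rw [iteratedDerivWithin_Icc_exp_const_mul y k zero_lt_one (left_mem_Icc.2 zero_le_one)]
    simp [div_eq_inv_mul, mul_comm]
  have hint : ∫ s in (0 : ℝ)..1,
      ((1 - s) ^ n / n.factorial) • iteratedDerivWithin (n + 1) (fun t => exp (y * t)) (Icc 0 1) s =
      ∫ s in (0 : ℝ)..1, y ^ (n + 1) / n.factorial * ((1 - s) ^ n * exp (y * s)) := by
    refine integral_congr fun s hs => ?_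
    rw [uIcc_of_le zero_le_one] at hs
    simp only [smul_eq_mul, iteratedDerivWithin_Icc_exp_const_mul y (n + 1) zero_lt_one hs]
    ring
  rw [hsum, hint, integral_const_mul] at htaylor
  simpa only [mul_one] using htaylor

/-- The moment generating function of the Beta(1, n + 1) distribution, whose density on `[0, 1]`
is `(n + 1) (1 - s)ⁿ`. -/
noncomputable def betaOneMGF (n : ℕ) (y : ℝ) : ℝ :=
  (n + 1) * ∫ s in (0 : ℝ)..1, (1 - s) ^ n * exp (y * s)

theorem betaOneMGF_zero (n : ℕ) : betaOneMGF n 0 = 1 := by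
  simp only [betaOneMGF, zero_mul, exp_zero, mul_one]
  rw [integral_comp_sub_left (fun s => s ^ n), integral_pow]
  field_simp
  simp

theorem continuous_betaOneMGF (n : ℕ) : Continuous (betaOneMGF n) := by
  unfold betaOneMGF
  fun_prop

theorem betaOneMGF_pos (n : ℕ) (y : ℝ) : 0 < betaOneMGF n y := by
  refine mul_pos n.cast_add_one_pos <| intervalIntegral_pos_of_pos_on
    ((by fun_prop : Continuous _).intervalIntegrable _ _) (fun s hs => ?_) zero_lt_one
  have : 0 < 1 - s := sub_pos.2 hs.2
  positivity

theorem strictMono_betaOneMGF (n : ℕ) : StrictMono (betaOneMGF n) := by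
  intro a b hab
  suffices 0 < ∫ s in (0 : ℝ)..1, (1 - s) ^ n * exp (b * s) - (1 - s) ^ n * exp (a * s) by
    rw [integral_sub ((by fun_prop : Continuous _).intervalIntegrable _ _)
      ((by fun_prop : Continuous _).intervalIntegrable _ _)] at this
    unfold betaOneMGF
    gcongr
    linarith
  refine intervalIntegral_pos_of_pos_on ((by fun_prop : Continuous _).intervalIntegrable _ _)
    (fun s hs => ?_) zero_lt_one
  have h1s : 0 < 1 - s := sub_pos.2 hs.2
  have hexp : 0 < exp (b * s) - exp (a * s) :=
    sub_pos.2 (exp_lt_exp.2 (mul_lt_mul_of_pos_right hab hs.1))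
  rw [← mul_sub]
  positivity

theorem factorial_div_pow_mul_exp_sub_sum_range_eq_betaOneMGF {n : ℕ} {y : ℝ} (hy : y ≠ 0) :
    ((n + 1).factorial : ℝ) / y ^ (n + 1) *
        (exp y - ∑ l ∈ Finset.range (n + 1), y ^ l / l.factorial) = betaOneMGF n y := by
  rw [exp_sub_sum_range_eq_integral, betaOneMGF, Nat.factorial_succ]
  generalize ∫ s in (0 : ℝ)..1, (1 - s) ^ n * exp (y * s) = I
  push_cast
  field_simp

theorem stmt_7_general (m : ℕ) (hm : 2 ≤ m) (φ : ℝ → ℝ)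
    (hφ : ∀ y : ℝ, φ y = if y = 0 then 1 else
      (m.factorial : ℝ) / y ^ m *
        (Real.exp y - ∑ l ∈ Finset.range m, y ^ l / l.factorial)) :
    Filter.Tendsto φ (nhds 0) (nhds 1) ∧ Continuous φ ∧
    MonotoneOn φ (Set.Ici (0:ℝ)) ∧
    (∀ y : ℝ, y < 0 → 0 < φ y ∧ φ y < 1) ∧
    (∀ y : ℝ, 0 ≤ φ y) := by
  obtain ⟨n, rfl⟩ : ∃ n, m = n + 1 := ⟨m - 1, by omega⟩
  obtain rfl : φ = betaOneMGF n := by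
    funext y
    rw [hφ]
    split_ifs with hy
    · rw [hy, betaOneMGF_zero]
    · exact factorial_div_pow_mul_exp_sub_sum_range_eq_betaOneMGF hy
  refine ⟨betaOneMGF_zero n ▸ (continuous_betaOneMGF n).tendsto 0, continuous_betaOneMGF n,
    (strictMono_betaOneMGF n).monotone.monotoneOn _, fun y hy => ⟨betaOneMGF_pos n y, ?_⟩,
    fun y => (betaOneMGF_pos n y).le⟩
  simpa only [betaOneMGF_zero] using strictMono_betaOneMGF n hy

/-- properties of `φₘ(y) = (m!/yᵐ)(eʸ - ∑_{l<m} yˡ/l!)`, with `φₘ(0) = 1`,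
for an even `m`. -/
theorem stmt_7 (m : ℕ) (hm : 2 ≤ m) (hme : Even m) (φ : ℝ → ℝ)
    (hφ : ∀ y : ℝ, φ y = if y = 0 then 1 else
      (m.factorial : ℝ) / y ^ m *
        (Real.exp y - ∑ l ∈ Finset.range m, y ^ l / l.factorial)) :
    Filter.Tendsto φ (nhds 0) (nhds 1) ∧ Continuous φ ∧
    MonotoneOn φ (Set.Ici (0:ℝ)) ∧
    (∀ y : ℝ, y < 0 → 0 < φ y ∧ φ y < 1) ∧
    (∀ y : ℝ, 0 ≤ φ y) :=
  stmt_7_general m hm φ hφ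
end

section
/- For every $d > 0$ and every $x \in (-\infty, d]$, $e^x \le \frac{d+x}{2d}e^d + \frac{d-x}{2d}e^{-d} - \frac{\sinh(d) - d e^{-d}}{2}\left(1 - \frac{x^2}{d^2}\right)$. -/
/-!
Put `t = x + d`. The parabola in question is `e^{-d} (1 + t + φ(2d) t²)` with
`φ(T) = (e^T - 1 - T) / T²`, so the bound reduces to `φ(t) ≤ φ(2d)` for `t ≤ 2d`.
For `0 ≤ t` this holds termwise in `φ(t) = ∑ tⁿ / (n + 2)!`; for `t ≤ 0` one has
`φ(t) ≤ 1/2 ≤ φ(2d)`. The comparison of `φ(t)` with `φ(T)` is stated multiplied out by `t² T²`,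
since `φ(0)` is a junk value in Lean.
-/

namespace Real

open scoped Nat

theorem hasSum_exp_sub_one_sub (t : ℝ) :
    HasSum (fun n ↦ t ^ (n + 2) / (n + 2)!) (exp t - 1 - t) := by
  have h := (hasSum_nat_add_iff' 2).mpr (exp_eq_exp_ℝ ▸ NormedSpace.expSeries_div_hasSum_exp t)
  simpa [Finset.sum_range_succ, sub_sub] using h

theorem exp_le_quadratic_of_nonpos {t : ℝ} (ht : t ≤ 0) : exp t ≤ 1 + t + t ^ 2 / 2 := by
  have hcubic : 1 - t + t ^ 2 / 2 - t ^ 3 / 6 ≤ exp (-t) := by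
    have h := sum_le_exp_of_nonneg (neg_nonneg.mpr ht) 4
    norm_num [Finset.sum_range_succ, Nat.factorial] at h
    linarith
  -- the product of the two Taylor polynomials is `1 - t³/6 + t⁴/12 - t⁵/12 ≥ 1`
  have hprod : 1 ≤ (1 + t + t ^ 2 / 2) * (1 - t + t ^ 2 / 2 - t ^ 3 / 6) := by
    nlinarith [pow_two_nonneg t, mul_nonpos_of_nonneg_of_nonpos (pow_two_nonneg t) ht,
      mul_nonpos_of_nonneg_of_nonpos (pow_two_nonneg (t ^ 2)) ht]
  have hquad : 0 < 1 + t + t ^ 2 / 2 := by nlinarith [sq_nonneg (t + 1)]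
  refine le_of_mul_le_mul_right ?_ (exp_pos (-t))
  calc exp t * exp (-t) = 1 := by rw [← exp_add, add_neg_cancel, exp_zero]
    _ ≤ (1 + t + t ^ 2 / 2) * (1 - t + t ^ 2 / 2 - t ^ 3 / 6) := hprod
    _ ≤ (1 + t + t ^ 2 / 2) * exp (-t) := by gcongr

theorem sq_mul_exp_sub_one_sub_le_of_nonneg {t T : ℝ} (ht : 0 ≤ t) (htT : t ≤ T) :
    T ^ 2 * (exp t - 1 - t) ≤ t ^ 2 * (exp T - 1 - T) := by
  refine hasSum_le (fun n ↦ ?_) ((hasSum_exp_sub_one_sub t).mul_left (T ^ 2))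
    ((hasSum_exp_sub_one_sub T).mul_left (t ^ 2))
  have hpow : t ^ n ≤ T ^ n := pow_le_pow_left₀ ht htT n
  calc T ^ 2 * (t ^ (n + 2) / (n + 2)!) = t ^ 2 * T ^ 2 * t ^ n / (n + 2)! := by ring
    _ ≤ t ^ 2 * T ^ 2 * T ^ n / (n + 2)! := by gcongr
    _ = t ^ 2 * (T ^ (n + 2) / (n + 2)!) := by ring

theorem sq_mul_exp_sub_one_sub_le {t T : ℝ} (hT : 0 ≤ T) (htT : t ≤ T) :
    T ^ 2 * (exp t - 1 - t) ≤ t ^ 2 * (exp T - 1 - T) := by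
  rcases le_total 0 t with ht | ht
  · exact sq_mul_exp_sub_one_sub_le_of_nonneg ht htT
  · have hneg : exp t - 1 - t ≤ t ^ 2 / 2 := by linarith [exp_le_quadratic_of_nonpos ht]
    have hpos : T ^ 2 / 2 ≤ exp T - 1 - T := by linarith [quadratic_le_exp_of_nonneg hT]
    calc T ^ 2 * (exp t - 1 - t) ≤ T ^ 2 * (t ^ 2 / 2) := by gcongr
      _ = t ^ 2 * (T ^ 2 / 2) := by ring
      _ ≤ t ^ 2 * (exp T - 1 - T) := by gcongr

theorem exp_le_one_add_add_mul_sq {t T : ℝ} (hT : 0 < T) (htT : t ≤ T) :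
    exp t ≤ 1 + t + (exp T - 1 - T) / T ^ 2 * t ^ 2 := by
  have h := sq_mul_exp_sub_one_sub_le hT.le htT
  rw [div_mul_eq_mul_div, ← sub_le_iff_le_add', le_div_iff₀ (by positivity)]
  linarith

end Real

/-- parabolic upper bound on the exponential function over `(-∞, d]`. -/
theorem stmt_9 (d x : ℝ) (hd : 0 < d) (hx : x ≤ d) :
    Real.exp x ≤ (d + x) / (2 * d) * Real.exp d + (d - x) / (2 * d) * Real.exp (-d)
      - (Real.sinh d - d * Real.exp (-d)) / 2 * (1 - x ^ 2 / d ^ 2) := by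
  have h := Real.exp_le_one_add_add_mul_sq (by linarith : 0 < 2 * d) (by linarith : x + d ≤ 2 * d)
  rw [Real.exp_add, show Real.exp (2 * d) = Real.exp d ^ 2 by rw [sq, ← Real.exp_add, two_mul]] at h
  rw [Real.sinh_eq, Real.exp_neg]
  field_simp at h ⊢
  linear_combination h
end

section
/- For every $\gamma > 0$ and every $x > 0$, $\frac{\gamma e^x + e^{-\gamma x}}{1+\gamma} < 1 + \gamma(e^x - 1 - x)$. -/
/-- the Bennett MGF bound is strictly smaller than `1 + γ(eˣ - 1 - x)`. -/
theorem stmt_10 (γ x : ℝ) (hγ : 0 < γ) (hx : 0 < x) :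
    (γ * Real.exp x + Real.exp (-γ * x)) / (1 + γ) < 1 + γ * (Real.exp x - 1 - x) := by
  have hγ1 : (0:ℝ) < 1 + γ := by linarith
  rw [div_lt_iff₀ hγ1]
  have ht : 0 < γ * x := mul_pos hγ hx
  -- exp x ≥ 1 + x + x²/2
  have h1 : 1 + x + x^2/2 ≤ Real.exp x := by
    have := Real.sum_le_exp_of_nonneg hx.le 3
    simp [Finset.sum_range_succ, Nat.factorial] at this
    nlinarith [this]
  have h2 : 1 + γ*x + (γ*x)^2/2 ≤ Real.exp (γ*x) := by
    have := Real.sum_le_exp_of_nonneg ht.le 3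
    simp [Finset.sum_range_succ, Nat.factorial] at this
    nlinarith [this]
  have hv : 0 < Real.exp (γ*x) := Real.exp_pos _
  have hinv : Real.exp (-γ * x) = 1 / Real.exp (γ*x) := by
    rw [neg_mul, Real.exp_neg, one_div]
  rw [hinv]
  -- key: e^{-t} < 1 - t + t²/2 for t = γx > 0
  have key : 1 / Real.exp (γ*x) < 1 - γ*x + (γ*x)^2/2 := by
    rw [div_lt_iff₀ hv]
    nlinarith [h2, ht, sq_nonneg (γ*x), pow_pos ht 4]
  nlinarith [h1, key, mul_pos (mul_pos hγ hγ) (mul_pos hx hx)]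
end

section
/- Let $\{X_k, \mathcal{F}_k\}_{k=0}^n$ be a real-valued martingale, $m \ge 2$ an even integer, and suppose that almost surely $|X_k - X_{k-1}| \le d$ and $|\mathbb{E}[(X_k - X_{k-1})^l \mid \mathcal{F}_{k-1}]| \le \mu_l$ for $l = 2,\dots,m$ and all $k$, where $d > 0$ and $\mu_l \ge 0$. Let $\delta = \alpha/d$ and $\gamma_l = \mu_l/d^l$. Then for every $\alpha \ge 0$ and every $x \ge 0$, $\Pr(|X_n - X_0| \ge n\alpha) \le 2\left\{ e^{-\delta x}\left[1 + \sum_{l=2}^{m-1} \frac{(\gamma_l - \gamma_m)x^l}{l!} + \gamma_m(e^x - 1 - x)\right] \right\}^n$. -/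
/-!
For even `m` and `|t| ≤ d`, the order-`m` Taylor remainder of `exp` at `s * t` is at most
`(t / d) ^ m` times the one at `s * d`: the remainder series has nonnegative coefficients and
`t ^ (l + m) ≤ d ^ l * t ^ m`. This bounds `exp (s * Δ)` by a polynomial in the increment `Δ`
whose conditional expectation is controlled by the conditional moments (the first one vanishing
for a martingale), so the conditional moment generating function of every increment at `x / d` is
at most the bracket `B` of the bound. The tower property then gives
`𝔼[exp (x / d * (X n - X 0))] ≤ B ^ n`, and Chernoff's inequality for `X` and `-X` gives the
two-sided tail.
-/

open MeasureTheory ProbabilityTheory Real Finset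
open scoped Nat

theorem pow_mul_exp_sub_taylor_le {m : ℕ} (hm : Even m) {s t d : ℝ} (hs : 0 ≤ s) (ht : |t| ≤ d) :
    d ^ m * (exp (s * t) - ∑ l ∈ range m, (s * t) ^ l / l !) ≤
      t ^ m * (exp (s * d) - ∑ l ∈ range m, (s * d) ^ l / l !) := by
  have tail (y : ℝ) : exp y - ∑ l ∈ range m, y ^ l / l ! = ∑' l, y ^ (l + m) / (l + m)! := by
    simp only [exp_eq_exp_ℝ, NormedSpace.exp_eq_tsum_div]
    rw [← (summable_pow_div_factorial y).sum_add_tsum_nat_add m]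
    ring
  have summable_tail (y : ℝ) : Summable fun l => y ^ (l + m) / (l + m)! :=
    (summable_nat_add_iff m).2 (summable_pow_div_factorial y)
  rw [tail, tail, ← tsum_mul_left, ← tsum_mul_left]
  refine Summable.tsum_le_tsum (fun l => ?_) ((summable_tail _).mul_left _)
    ((summable_tail _).mul_left _)
  have htm : 0 ≤ t ^ m := hm.pow_nonneg t
  have htl : t ^ l ≤ d ^ l :=
    (le_abs_self _).trans (abs_pow t l ▸ pow_le_pow_left₀ (abs_nonneg t) ht l)
  calc d ^ m * ((s * t) ^ (l + m) / (l + m)!)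
      = s ^ (l + m) * (t ^ l * t ^ m) * d ^ m / (l + m)! := by ring
    _ ≤ s ^ (l + m) * (d ^ l * t ^ m) * d ^ m / (l + m)! := by
      have : 0 ≤ d := (abs_nonneg t).trans ht
      gcongr
    _ = t ^ m * ((s * d) ^ (l + m) / (l + m)!) := by ring

theorem exp_mul_le_sum_add_mul_pow {m : ℕ} (hm : Even m) {s t d : ℝ} (hs : 0 ≤ s) (hd : 0 < d)
    (ht : |t| ≤ d) :
    exp (s * t) ≤ ∑ l ∈ range m, s ^ l / l ! * t ^ l
      + (exp (s * d) - ∑ l ∈ range m, (s * d) ^ l / l !) / d ^ m * t ^ m := by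
  have h_taylor : ∑ l ∈ range m, (s * t) ^ l / l ! = ∑ l ∈ range m, s ^ l / l ! * t ^ l :=
    sum_congr rfl fun l _ => by rw [mul_pow]; ring
  rw [div_mul_eq_mul_div, ← sub_le_iff_le_add', ← h_taylor, le_div_iff₀ (by positivity)]
  linarith [pow_mul_exp_sub_taylor_le hm hs ht]

section
variable {Ω : Type*} {m0 : MeasurableSpace Ω} {μ : Measure Ω}

theorem integrable_exp_mul_of_ae_abs_le [IsFiniteMeasure μ] {f : Ω → ℝ}
    (hf : AEStronglyMeasurable f μ) {C : ℝ} (hC : ∀ᵐ ω ∂μ, |f ω| ≤ C) (s : ℝ) :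
    Integrable (fun ω => exp (s * f ω)) μ := by
  refine .of_bound (continuous_exp.comp_aestronglyMeasurable (hf.const_mul s)) (exp (|s| * C)) ?_
  filter_upwards [hC] with ω hω
  rw [norm_of_nonneg (exp_pos _).le, exp_le_exp]
  calc s * f ω ≤ |s * f ω| := le_abs_self _
    _ = |s| * |f ω| := abs_mul _ _
    _ ≤ |s| * C := by gcongr

theorem integrable_pow_of_ae_abs_le [IsFiniteMeasure μ] {f : Ω → ℝ}
    (hf : AEStronglyMeasurable f μ) {C : ℝ} (hC : ∀ᵐ ω ∂μ, |f ω| ≤ C) (l : ℕ) :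
    Integrable (fun ω => f ω ^ l) μ := by
  refine .of_bound (hf.pow l) (C ^ l) ?_
  filter_upwards [hC] with ω hω
  rw [norm_pow, norm_eq_abs]
  exact pow_le_pow_left₀ (abs_nonneg _) hω l

theorem condExp_exp_mul_le [IsFiniteMeasure μ] {𝒢 : MeasurableSpace Ω} (h𝒢 : 𝒢 ≤ m0)
    {Δ : Ω → ℝ} (hΔ : AEStronglyMeasurable[m0] Δ μ) {s d : ℝ} (hs : 0 ≤ s) (hd : 0 < d)
    (hΔd : ∀ᵐ ω ∂μ, |Δ ω| ≤ d) (hmean : μ[Δ | 𝒢] =ᵐ[μ] 0) {m : ℕ} (hm : 2 ≤ m) (hme : Even m)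
    {M : ℕ → ℝ} (hmom : ∀ l ∈ Icc 2 m, ∀ᵐ ω ∂μ, μ[fun ω => Δ ω ^ l | 𝒢] ω ≤ M l) :
    ∀ᵐ ω ∂μ, μ[fun ω => exp (s * Δ ω) | 𝒢] ω ≤
      1 + ∑ l ∈ Ico 2 m, s ^ l / l ! * M l
        + (exp (s * d) - ∑ l ∈ range m, (s * d) ^ l / l !) / d ^ m * M m := by
  set c := (exp (s * d) - ∑ l ∈ range m, (s * d) ^ l / l !) / d ^ m
  have hc : 0 ≤ c :=
    div_nonneg (sub_nonneg.2 (sum_le_exp_of_nonneg (by positivity) m)) (by positivity)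
  have hpow := integrable_pow_of_ae_abs_le hΔ hΔd
  have hsum_int : Integrable (∑ l ∈ range m, (s ^ l / l !) • fun ω => Δ ω ^ l) μ :=
    integrable_finsetSum' _ fun l _ => (hpow l).smul _
  set P : Ω → ℝ := (∑ l ∈ range m, (s ^ l / l !) • fun ω => Δ ω ^ l) + c • fun ω => Δ ω ^ m
  have hexp_le_P : (fun ω => exp (s * Δ ω)) ≤ᵐ[μ] P := by
    filter_upwards [hΔd] with ω hω
    simpa only [P, Pi.add_apply, Finset.sum_apply, Pi.smul_apply, smul_eq_mul, c]
      using exp_mul_le_sum_add_mul_pow hme hs hd hω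
  have hcondExp_P : μ[P | 𝒢] =ᵐ[μ]
      (∑ l ∈ range m, (s ^ l / l !) • μ[fun ω => Δ ω ^ l | 𝒢]) + c • μ[fun ω => Δ ω ^ m | 𝒢] := by
    filter_upwards [condExp_add hsum_int ((hpow m).smul c) 𝒢,
      condExp_finsetSum (s := range m) (fun l _ => (hpow l).smul (s ^ l / l !)) 𝒢,
      condExp_smul c (fun ω => Δ ω ^ m) 𝒢,
      ae_all_iff.2 fun l => condExp_smul (μ := μ) (s ^ l / l !) (fun ω => Δ ω ^ l) 𝒢]
      with ω h_add h_sum h_smul h_smuls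
    refine h_add.trans ?_
    rw [Pi.add_apply, h_sum, h_smul, Finset.sum_apply]
    simp only [h_smuls, Pi.add_apply, Finset.sum_apply]
  filter_upwards [condExp_mono (integrable_exp_mul_of_ae_abs_le hΔ hΔd s)
      (hsum_int.add ((hpow m).smul c)) hexp_le_P,
    hcondExp_P, hmean, (Filter.eventually_all_finset _).2 hmom] with ω h_le h_P h_mean h_mom
  have h_moments : ∑ l ∈ Ico 2 m, s ^ l / l ! * μ[fun ω => Δ ω ^ l | 𝒢] ω
      ≤ ∑ l ∈ Ico 2 m, s ^ l / l ! * M l :=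
    sum_le_sum fun l hl =>
      mul_le_mul_of_nonneg_left (h_mom l (Ico_subset_Icc_self hl)) (by positivity)
  have h_top := mul_le_mul_of_nonneg_left (h_mom m (right_mem_Icc.2 hm)) hc
  refine h_le.trans ?_
  rw [h_P, ← sum_range_add_sum_Ico _ hm]
  simp only [sum_range_succ, range_zero, sum_empty, Pi.add_apply, Finset.sum_apply, Pi.smul_apply,
    smul_eq_mul, pow_zero, pow_one, condExp_const h𝒢, h_mean, Pi.zero_apply, Nat.factorial_zero,
    Nat.factorial_one, Nat.cast_one]
  linarith

theorem abs_condExp_neg_pow_ae_eq (𝒢 : MeasurableSpace Ω) (f : Ω → ℝ) (l : ℕ) :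
    (fun ω => |μ[fun ω => (-f ω) ^ l | 𝒢] ω|) =ᵐ[μ] fun ω => |μ[fun ω => f ω ^ l | 𝒢] ω| := by
  have h : (fun ω => (-f ω) ^ l) = (-1 : ℝ) ^ l • fun ω => f ω ^ l :=
    funext fun ω => by rw [neg_pow, Pi.smul_apply, smul_eq_mul]
  filter_upwards [condExp_smul (μ := μ) ((-1 : ℝ) ^ l) (fun ω => f ω ^ l) 𝒢] with ω hω
  rw [h, hω, Pi.smul_apply, smul_eq_mul, abs_mul, abs_pow, abs_neg, abs_one, one_pow, one_mul]

theorem integrable_exp_mul_sub_of_ae_abs_le [IsFiniteMeasure μ] {Y : ℕ → Ω → ℝ}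
    (hY : ∀ k, AEStronglyMeasurable (Y k) μ) {d : ℝ} {n : ℕ}
    (hjump : ∀ k < n, ∀ᵐ ω ∂μ, |Y (k + 1) ω - Y k ω| ≤ d) (s : ℝ) {k : ℕ} (hk : k ≤ n) :
    Integrable (fun ω => exp (s * (Y k ω - Y 0 ω))) μ := by
  refine integrable_exp_mul_of_ae_abs_le ((hY k).sub (hY 0)) (C := k * d) ?_ s
  filter_upwards [(Filter.eventually_all_finset (range n)).2 fun i hi => hjump i (mem_range.1 hi)]
    with ω hω
  calc |Y k ω - Y 0 ω| = dist (Y 0 ω) (Y k ω) := by rw [Real.dist_eq, abs_sub_comm]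
    _ ≤ ∑ i ∈ range k, dist (Y i ω) (Y (i + 1) ω) := dist_le_range_sum_dist (Y · ω) k
    _ ≤ ∑ _i ∈ range k, d := sum_le_sum fun i hi => by
      rw [Real.dist_eq, abs_sub_comm]
      exact hω i (mem_range.2 ((mem_range.1 hi).trans_le hk))
    _ = k * d := by rw [sum_const, card_range, nsmul_eq_mul]

theorem integral_exp_mul_sub_le_pow [IsProbabilityMeasure μ] {ℱ : Filtration ℕ m0}
    {Y : ℕ → Ω → ℝ} (hY : StronglyAdapted ℱ Y) {s d B : ℝ} {n : ℕ}
    (hjump : ∀ k < n, ∀ᵐ ω ∂μ, |Y (k + 1) ω - Y k ω| ≤ d)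
    (hcond : ∀ k < n, ∀ᵐ ω ∂μ, μ[fun ω => exp (s * (Y (k + 1) ω - Y k ω)) | ℱ k] ω ≤ B) :
    ∫ ω, exp (s * (Y n ω - Y 0 ω)) ∂μ ≤ B ^ n := by
  have hYm k : AEStronglyMeasurable (Y k) μ := ((hY k).mono (ℱ.le k)).aestronglyMeasurable
  have hint {k} (hk : k ≤ n) := integrable_exp_mul_sub_of_ae_abs_le hYm hjump s hk
  suffices ∀ k ≤ n, ∫ ω, exp (s * (Y k ω - Y 0 ω)) ∂μ ≤ B ^ k from this n le_rfl
  intro k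
  induction k with
  | zero => simp
  | succ k ih =>
    intro hk
    set G := fun ω => exp (s * (Y k ω - Y 0 ω))
    set E := fun ω => exp (s * (Y (k + 1) ω - Y k ω))
    have hB : 0 ≤ B := by
      have h_nonneg : 0 ≤ᵐ[μ] μ[E | ℱ k] :=
        condExp_nonneg (ae_of_all μ fun ω => (exp_pos (s * (Y (k + 1) ω - Y k ω))).le)
      obtain ⟨ω, hω, hpos⟩ := ((hcond k hk).and h_nonneg).exists
      exact hpos.trans hω
    have hG : StronglyMeasurable[ℱ k] G := continuous_exp.comp_stronglyMeasurable
      (((hY k).sub ((hY 0).mono (ℱ.mono (Nat.zero_le k)))).const_mul s)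
    have hprod : (fun ω => exp (s * (Y (k + 1) ω - Y 0 ω))) = G * E :=
      funext fun ω => by simp only [Pi.mul_apply, G, E, ← exp_add]; ring_nf
    have hE : Integrable E μ :=
      integrable_exp_mul_of_ae_abs_le ((hYm _).sub (hYm _)) (hjump k hk) s
    have hpull : μ[G * E | ℱ k] =ᵐ[μ] G * μ[E | ℱ k] :=
      condExp_mul_of_stronglyMeasurable_left hG (hprod ▸ hint hk) hE
    calc ∫ ω, exp (s * (Y (k + 1) ω - Y 0 ω)) ∂μ = ∫ ω, μ[G * E | ℱ k] ω ∂μ := by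
          rw [hprod, integral_condExp (ℱ.le k)]
      _ = ∫ ω, G ω * μ[E | ℱ k] ω ∂μ := integral_congr_ae hpull
      _ ≤ ∫ ω, G ω * B ∂μ := by
        refine integral_mono_ae (integrable_condExp.congr hpull) ((hint (by omega)).mul_const B) ?_
        filter_upwards [hcond k hk] with ω hω
        exact mul_le_mul_of_nonneg_left hω (exp_pos _).le
      _ = (∫ ω, G ω ∂μ) * B := integral_mul_const _ _
      _ ≤ B ^ k * B := mul_le_mul_of_nonneg_right (ih (by omega)) hB
      _ = B ^ (k + 1) := (pow_succ B k).symm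

theorem MeasureTheory.Martingale.condExp_succ_sub_ae_eq_zero {ℱ : Filtration ℕ m0}
    {X : ℕ → Ω → ℝ} (hX : Martingale X ℱ μ) (k : ℕ) : μ[X (k + 1) - X k | ℱ k] =ᵐ[μ] 0 := by
  filter_upwards [condExp_sub (hX.integrable (k + 1)) (hX.integrable k) (ℱ k),
    hX.condExp_ae_eq k.le_succ, hX.condExp_ae_eq le_rfl] with ω h_sub h_succ h_self
  rw [h_sub, Pi.sub_apply, h_succ, h_self, sub_self, Pi.zero_apply]

end

/-- In the paper's notation `γ l = M l / d ^ l`. -/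
noncomputable def mgfMomentBound (m : ℕ) (d : ℝ) (M : ℕ → ℝ) (x : ℝ) : ℝ :=
  1 + (∑ l ∈ Icc 2 (m - 1), (M l / d ^ l - M m / d ^ m) * x ^ l / l !)
    + M m / d ^ m * (exp x - 1 - x)

theorem mgfMomentBound_eq {m : ℕ} (hm : 2 ≤ m) (d : ℝ) (M : ℕ → ℝ) (x : ℝ) :
    mgfMomentBound m d M x = 1 + ∑ l ∈ Ico 2 m, (x / d) ^ l / l ! * M l
      + (exp x - ∑ l ∈ range m, x ^ l / l !) / d ^ m * M m := by
  have h_split : ∑ l ∈ range m, x ^ l / l ! = 1 + x + ∑ l ∈ Ico 2 m, x ^ l / l ! := by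
    rw [← sum_range_add_sum_Ico _ hm]
    simp [sum_range_succ]
  have h_term (l : ℕ) : (M l / d ^ l - M m / d ^ m) * x ^ l / l !
      = (x / d) ^ l / l ! * M l - M m / d ^ m * (x ^ l / l !) := by
    rw [div_pow]; ring
  rw [mgfMomentBound, Icc_sub_one_right_eq_Ico_of_not_isMin (by simp; omega), h_split]
  simp only [h_term, sum_sub_distrib, ← mul_sum]
  ring

theorem MeasureTheory.Martingale.measureReal_le_sub_le {Ω : Type*} {m0 : MeasurableSpace Ω}
    {μ : Measure Ω} [IsProbabilityMeasure μ] {ℱ : Filtration ℕ m0} {X : ℕ → Ω → ℝ}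
    (hX : Martingale X ℱ μ) {n m : ℕ} (hm : 2 ≤ m) (hme : Even m) {d : ℝ} (hd : 0 < d) {M : ℕ → ℝ}
    (hjump : ∀ k < n, ∀ᵐ ω ∂μ, |X (k + 1) ω - X k ω| ≤ d)
    (hmom : ∀ k < n, ∀ l ∈ Icc 2 m,
      ∀ᵐ ω ∂μ, |μ[fun ω => (X (k + 1) ω - X k ω) ^ l | ℱ k] ω| ≤ M l)
    (α : ℝ) {x : ℝ} (hx : 0 ≤ x) :
    μ.real {ω | n * α ≤ X n ω - X 0 ω} ≤ (exp (-(α / d) * x) * mgfMomentBound m d M x) ^ n := by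
  have hs : 0 ≤ x / d := by positivity
  have hXm k : AEStronglyMeasurable (X k) μ :=
    ((hX.stronglyAdapted k).mono (ℱ.le k)).aestronglyMeasurable
  have hcond : ∀ k < n, ∀ᵐ ω ∂μ,
      μ[fun ω => exp (x / d * (X (k + 1) ω - X k ω)) | ℱ k] ω ≤ mgfMomentBound m d M x := by
    intro k hk
    have h := condExp_exp_mul_le (ℱ.le k) ((hXm (k + 1)).sub (hXm k)) hs hd (hjump k hk)
      (hX.condExp_succ_sub_ae_eq_zero k) hm hme
      fun l hl => (hmom k hk l hl).mono fun ω hω => (abs_le.1 hω).2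
    rwa [div_mul_cancel₀ x hd.ne', ← mgfMomentBound_eq hm] at h
  calc μ.real {ω | n * α ≤ X n ω - X 0 ω}
      ≤ exp (-(x / d) * (n * α)) * mgf (fun ω => X n ω - X 0 ω) μ (x / d) :=
        measure_ge_le_exp_mul_mgf _ hs (integrable_exp_mul_sub_of_ae_abs_le hXm hjump _ le_rfl)
    _ ≤ exp (-(x / d) * (n * α)) * mgfMomentBound m d M x ^ n := by
        gcongr
        exact integral_exp_mul_sub_le_pow hX.stronglyAdapted hjump hcond
    _ = (exp (-(α / d) * x) * mgfMomentBound m d M x) ^ n := by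
        rw [mul_pow, ← exp_nat_mul]
        ring_nf

theorem stmt_13_general {Ω : Type*} {m0 : MeasurableSpace Ω} {μ : Measure Ω} [IsProbabilityMeasure μ]
    (ℱ : Filtration ℕ m0) (X : ℕ → Ω → ℝ) (hmart : Martingale X ℱ μ)
    (n : ℕ) (m : ℕ) (hm : 2 ≤ m) (hme : Even m)
    (d : ℝ) (hd : 0 < d) (μl : ℕ → ℝ)
    (hjump : ∀ k, 1 ≤ k → k ≤ n → ∀ᵐ ω ∂μ, |X k ω - X (k - 1) ω| ≤ d)
    (hmom : ∀ k, 1 ≤ k → k ≤ n → ∀ l, 2 ≤ l → l ≤ m →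
      ∀ᵐ ω ∂μ, |(μ[fun ω => (X k ω - X (k - 1) ω) ^ l | ℱ (k - 1)]) ω| ≤ μl l)
    (α : ℝ) (x : ℝ) (hx : 0 ≤ x) :
    (μ {ω | (n : ℝ) * α ≤ |X n ω - X 0 ω|}).toReal ≤
      2 * (Real.exp (-(α / d) * x) *
        (1 + (∑ l ∈ Finset.Icc 2 (m - 1), (μl l / d ^ l - μl m / d ^ m) * x ^ l / l.factorial)
          + μl m / d ^ m * (Real.exp x - 1 - x))) ^ n := by
  have hjump' : ∀ k < n, ∀ᵐ ω ∂μ, |X (k + 1) ω - X k ω| ≤ d := fun k hk => by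
    simpa using hjump (k + 1) (by omega) hk
  have hmom' : ∀ k < n, ∀ l ∈ Icc 2 m,
      ∀ᵐ ω ∂μ, |μ[fun ω => (X (k + 1) ω - X k ω) ^ l | ℱ k] ω| ≤ μl l := fun k hk l hl => by
    simpa using hmom (k + 1) (by omega) hk l (mem_Icc.1 hl).1 (mem_Icc.1 hl).2
  have hneg ω : (-X) n ω - (-X) 0 ω = -(X n ω - X 0 ω) := by simp only [Pi.neg_apply]; ring
  have hneg_succ k ω : (-X) (k + 1) ω - (-X) k ω = -(X (k + 1) ω - X k ω) := by
    simp only [Pi.neg_apply]; ring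
  have h_upper := hmart.measureReal_le_sub_le hm hme hd hjump' hmom' α hx
  have h_lower := hmart.neg.measureReal_le_sub_le hm hme hd
    (by simpa only [hneg_succ, abs_neg] using hjump')
    (fun k hk l hl => by
      simp only [hneg_succ]
      filter_upwards [abs_condExp_neg_pow_ae_eq (ℱ k) (fun ω => X (k + 1) ω - X k ω) l,
        hmom' k hk l hl] with ω h_eq h_le
      exact h_eq.trans_le h_le) α hx
  have h_union : {ω | (n : ℝ) * α ≤ |X n ω - X 0 ω|} ⊆
      {ω | n * α ≤ X n ω - X 0 ω} ∪ {ω | n * α ≤ (-X) n ω - (-X) 0 ω} := fun ω hω => by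
    simpa only [Set.mem_union, Set.mem_ofPred_eq, hneg] using le_abs.1 hω
  show μ.real _ ≤ 2 * (exp (-(α / d) * x) * mgfMomentBound m d μl x) ^ n
  linarith [measureReal_mono (μ := μ) h_union |>.trans (measureReal_union_le _ _)]

/-- refined martingale concentration inequality using conditional moments
up to an even order `m`. -/
theorem stmt_13 {Ω : Type*} {m0 : MeasurableSpace Ω} {μ : Measure Ω} [IsProbabilityMeasure μ]
    (ℱ : Filtration ℕ m0) (X : ℕ → Ω → ℝ) (hmart : Martingale X ℱ μ)
    (n : ℕ) (m : ℕ) (hm : 2 ≤ m) (hme : Even m)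
    (d : ℝ) (hd : 0 < d) (μl : ℕ → ℝ) (hμl : ∀ l, 2 ≤ l → l ≤ m → 0 ≤ μl l)
    (hjump : ∀ k, 1 ≤ k → k ≤ n → ∀ᵐ ω ∂μ, |X k ω - X (k - 1) ω| ≤ d)
    (hmom : ∀ k, 1 ≤ k → k ≤ n → ∀ l, 2 ≤ l → l ≤ m →
      ∀ᵐ ω ∂μ, |(μ[fun ω => (X k ω - X (k - 1) ω) ^ l | ℱ (k - 1)]) ω| ≤ μl l)
    (α : ℝ) (hα : 0 ≤ α) (x : ℝ) (hx : 0 ≤ x) :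
    (μ {ω | (n : ℝ) * α ≤ |X n ω - X 0 ω|}).toReal ≤
      2 * (Real.exp (-(α / d) * x) *
        (1 + (∑ l ∈ Finset.Icc 2 (m - 1), (μl l / d ^ l - μl m / d ^ m) * x ^ l / l.factorial)
          + μl m / d ^ m * (Real.exp x - 1 - x))) ^ n :=
  stmt_13_general ℱ X hmart n m hm hme d hd μl hjump hmom α x hx
end

section
/- Fix an even integer $m \ge 2$, $x \ge 0$, and a nonincreasing sequence $1 \ge \gamma_2 \ge \gamma_3 \ge \cdots \ge \gamma_{m+2} \ge 0$. Then $1 + \sum_{l=2}^{m-1} \frac{(\gamma_l - \gamma_m)x^l}{l!} + \gamma_m(e^x - 1 - x) \ge 1 + \sum_{l=2}^{m+1} \frac{(\gamma_l - \gamma_{m+2})x^l}{l!} + \gamma_{m+2}(e^x - 1 - x)$; i.e., the base of the exponential bound in the refined martingale inequality is nonincreasing in $m$. -/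
/-!
Write `F n c` (`expBoundBase γ n c x`) for `1 + ∑_{l=2}^{n} (γ_l - c) x^l / l! + c (e^x - 1 - x)`. Since
`e^x - 1 - x` dominates every partial sum `∑_{l=2}^{n} x^l / l!` when `x ≥ 0`, `F n c` is
nondecreasing in `c`, so `F (m+1) γ_{m+2} ≤ F (m+1) γ_m`. Going from `F (m-1) γ_m` to
`F (m+1) γ_m` adds the terms `(γ_m - γ_m) x^m / m!` and `(γ_{m+1} - γ_m) x^{m+1} / (m+1)!`,
which are `0` and `≤ 0`.
-/

open Finset

noncomputable def expBoundBase (γ : ℕ → ℝ) (n : ℕ) (c x : ℝ) : ℝ :=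
  1 + (∑ l ∈ Icc 2 n, (γ l - c) * x ^ l / l.factorial) + c * (Real.exp x - 1 - x)

lemma sum_Icc_two_pow_div_factorial_le {x : ℝ} (hx : 0 ≤ x) (n : ℕ) :
    ∑ l ∈ Icc 2 n, x ^ l / l.factorial ≤ Real.exp x - 1 - x := by
  have hsub : ∑ l ∈ Icc 2 n, x ^ l / l.factorial ≤ ∑ l ∈ Ico 2 (n + 2), x ^ l / l.factorial :=
    sum_le_sum_of_subset_of_nonneg (Icc_subset_Ico_right (by omega)) fun _ _ _ => by positivity
  have hsplit := sum_range_add_sum_Ico (fun l => x ^ l / l.factorial) (by omega : 2 ≤ n + 2)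
  have hfirst : ∑ l ∈ range 2, x ^ l / l.factorial = 1 + x := by norm_num [sum_range_succ]
  rw [hfirst] at hsplit
  linarith [Real.sum_le_exp_of_nonneg hx (n + 2)]

lemma expBoundBase_mono {x : ℝ} (hx : 0 ≤ x) (γ : ℕ → ℝ) (n : ℕ) {c c' : ℝ} (hc : c ≤ c') :
    expBoundBase γ n c x ≤ expBoundBase γ n c' x := by
  have hdiff : expBoundBase γ n c' x - expBoundBase γ n c x
      = (c' - c) * (Real.exp x - 1 - x - ∑ l ∈ Icc 2 n, x ^ l / l.factorial) := by
    have hsplit (b : ℝ) : ∑ l ∈ Icc 2 n, (γ l - b) * x ^ l / l.factorial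
        = ∑ l ∈ Icc 2 n, γ l * x ^ l / l.factorial - b * ∑ l ∈ Icc 2 n, x ^ l / l.factorial := by
      rw [mul_sum, ← sum_sub_distrib]
      exact sum_congr rfl fun _ _ => by ring
    rw [expBoundBase, expBoundBase, hsplit, hsplit]
    ring
  have := mul_nonneg (sub_nonneg.2 hc) (sub_nonneg.2 (sum_Icc_two_pow_div_factorial_le hx n))
  linarith

lemma expBoundBase_succ (γ : ℕ → ℝ) {n : ℕ} (hn : 1 ≤ n) (c x : ℝ) :
    expBoundBase γ (n + 1) c x
      = expBoundBase γ n c x + (γ (n + 1) - c) * x ^ (n + 1) / (n + 1).factorial := by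
  rw [expBoundBase, expBoundBase, sum_Icc_succ_top (by omega)]
  ring

theorem stmt_14_general (m : ℕ) (hm : 2 ≤ m) (x : ℝ) (hx : 0 ≤ x)
    (γ : ℕ → ℝ)
    (hmono : ∀ l, 2 ≤ l → l + 1 ≤ m + 2 → γ (l + 1) ≤ γ l) :
    1 + (∑ l ∈ Finset.Icc 2 (m + 1), (γ l - γ (m + 2)) * x ^ l / l.factorial)
      + γ (m + 2) * (Real.exp x - 1 - x)
    ≤ 1 + (∑ l ∈ Finset.Icc 2 (m - 1), (γ l - γ m) * x ^ l / l.factorial)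
      + γ m * (Real.exp x - 1 - x) := by
  obtain ⟨k, rfl⟩ : ∃ k, m = k + 2 := ⟨m - 2, by omega⟩
  have h32 : γ (k + 3) ≤ γ (k + 2) := hmono (k + 2) (by omega) (by omega)
  have h43 : γ (k + 4) ≤ γ (k + 3) := hmono (k + 3) (by omega) (by omega)
  show expBoundBase γ (k + 3) (γ (k + 4)) x ≤ expBoundBase γ (k + 1) (γ (k + 2)) x
  have hlast : (γ (k + 3) - γ (k + 2)) * x ^ (k + 3) / (k + 3).factorial ≤ 0 :=
    div_nonpos_of_nonpos_of_nonneg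
      (mul_nonpos_of_nonpos_of_nonneg (by linarith) (pow_nonneg hx _)) (Nat.cast_nonneg _)
  calc expBoundBase γ (k + 3) (γ (k + 4)) x
      ≤ expBoundBase γ (k + 3) (γ (k + 2)) x := expBoundBase_mono hx γ _ (by linarith)
    _ ≤ expBoundBase γ (k + 1) (γ (k + 2)) x := by
      rw [expBoundBase_succ γ (by omega : 1 ≤ k + 2), expBoundBase_succ γ (by omega : 1 ≤ k + 1)]
      simpa using hlast

/-- the base of the exponential bound in the refined martingale inequality
is nonincreasing in the even parameter `m`. -/
theorem stmt_14 (m : ℕ) (hm : 2 ≤ m) (hme : Even m) (x : ℝ) (hx : 0 ≤ x)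
    (γ : ℕ → ℝ)
    (hγ01 : ∀ l, 2 ≤ l → l ≤ m + 2 → 0 ≤ γ l ∧ γ l ≤ 1)
    (hmono : ∀ l, 2 ≤ l → l + 1 ≤ m + 2 → γ (l + 1) ≤ γ l) :
    1 + (∑ l ∈ Finset.Icc 2 (m + 1), (γ l - γ (m + 2)) * x ^ l / l.factorial)
      + γ (m + 2) * (Real.exp x - 1 - x)
    ≤ 1 + (∑ l ∈ Finset.Icc 2 (m - 1), (γ l - γ m) * x ^ l / l.factorial)
      + γ m * (Real.exp x - 1 - x) :=
  stmt_14_general m hm x hx γ hmono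
end

section
/- Let $\gamma, \delta \in (0,1)$. Then the equation $\frac{1 - \gamma x}{\gamma(e^x - 1)} = \frac{1-\delta}{\delta}$ has a unique solution $x$ in the interval $(0, 1/\gamma)$, given by $x = \frac{1}{\gamma} + \frac{1}{\delta} - 1 - W_0\left(\frac{(1-\delta)}{\delta} e^{\frac{1}{\gamma} + \frac{1}{\delta} - 1}\right)$, where $W_0$ is the principal branch of the Lambert W function. -/
/-!
Clearing denominators, the optimality equation on `(0, 1/γ)` says `a - x = c eˣ` with
`c = (1-δ)/δ` and `a = 1/γ + c = 1/γ + 1/δ - 1`. Since `x ↦ c eˣ + x` is strictly increasing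
and crosses the level `a` between `0` and `1/γ`, there is exactly one such `x`. Multiplying
`u = a - x = c eˣ` by `eᵘ = e^{a-x}` gives `u eᵘ = c eᵃ`, i.e. `u = W₀(c eᵃ)` as `u > 0`.
-/

open Real Set

lemma optimality_eq_iff {γ c x : ℝ} (hγ : 0 < γ) (hx : 0 < x) :
    (1 - γ * x) / (γ * (exp x - 1)) = c ↔ 1 / γ + c - x = c * exp x := by
  have hden : γ * (exp x - 1) ≠ 0 := (mul_pos hγ (by linarith [add_one_lt_exp hx.ne'])).ne'
  rw [div_eq_iff hden]
  constructor <;> intro h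
  · field_simp
    linarith
  · field_simp at h
    linarith

lemma existsUnique_sub_eq_mul_exp {γ c : ℝ} (hγ : 0 < γ) (hc : 0 < c) :
    ∃! x, x ∈ Ioo 0 (1 / γ) ∧ 1 / γ + c - x = c * exp x := by
  set G : ℝ → ℝ := fun x => c * exp x + x
  have hG_mono : StrictMono G := fun a b hab => by
    have := (mul_lt_mul_iff_right₀ hc).2 (exp_lt_exp.2 hab)
    simp only [G]
    linarith
  have hG_cont : Continuous G := by fun_prop
  have hG_zero : G 0 < 1 / γ + c := by simp [G, hγ]
  have hG_inv : 1 / γ + c < G (1 / γ) := by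
    have := (mul_lt_mul_iff_right₀ hc).2 (one_lt_exp_iff.2 (one_div_pos.2 hγ))
    simp only [G]
    linarith
  obtain ⟨x, hx, hGx⟩ :=
    intermediate_value_Ioo (one_div_pos.2 hγ).le hG_cont.continuousOn ⟨hG_zero, hG_inv⟩
  refine ⟨x, ⟨hx, by simp only [G] at hGx; linarith⟩, fun y ⟨_, hy⟩ => hG_mono.injective ?_⟩
  simp only [G] at hGx ⊢
  linarith

lemma sub_mul_exp_sub_eq {a c x : ℝ} (h : a - x = c * exp x) :
    (a - x) * exp (a - x) = c * exp a := by
  have : c * exp a = c * exp x * exp (a - x) := by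
    rw [mul_assoc, ← exp_add, add_sub_cancel]
  rw [this, ← h]

/-- the optimality equation `(1-γx)/(γ(eˣ-1)) = (1-δ)/δ` has a unique
solution in `(0, 1/γ)`, given in closed form via the principal branch of the Lambert W
function: the solution `x` satisfies `x = 1/γ + 1/δ - 1 - W₀((1-δ)/δ · e^{1/γ+1/δ-1})`,
i.e. `u := 1/γ + 1/δ - 1 - x` is nonnegative and satisfies
`u·eᵘ = (1-δ)/δ · e^{1/γ+1/δ-1}`. -/
theorem stmt_18 (γ δ : ℝ) (hγ : γ ∈ Set.Ioo (0:ℝ) 1) (hδ : δ ∈ Set.Ioo (0:ℝ) 1) :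
    ∃! x : ℝ, x ∈ Set.Ioo 0 (1 / γ) ∧
      (1 - γ * x) / (γ * (Real.exp x - 1)) = (1 - δ) / δ ∧
      0 ≤ 1 / γ + 1 / δ - 1 - x ∧
      (1 / γ + 1 / δ - 1 - x) * Real.exp (1 / γ + 1 / δ - 1 - x)
        = (1 - δ) / δ * Real.exp (1 / γ + 1 / δ - 1) := by
  obtain ⟨hγ0, -⟩ := hγ
  obtain ⟨hδ0, hδ1⟩ := hδ
  have hc : 0 < (1 - δ) / δ := div_pos (by linarith) hδ0
  have ha : 1 / γ + 1 / δ - 1 = 1 / γ + (1 - δ) / δ := by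
    field_simp
    ring
  rw [ha]
  obtain ⟨x, ⟨hx, hxeq⟩, huniq⟩ := existsUnique_sub_eq_mul_exp hγ0 hc
  refine ⟨x, ⟨hx, (optimality_eq_iff hγ0 hx.1).2 hxeq, ?_, sub_mul_exp_sub_eq hxeq⟩, ?_⟩
  · rw [hxeq]
    positivity
  · rintro y ⟨hy, hyeq, -⟩
    exact huniq y ⟨hy, (optimality_eq_iff hγ0 hy.1).1 hyeq⟩
end
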